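/- arXiv:1804.08515 — 9 statements merged into one kernel-verified Lean document; each statement's English description precedes it below -/
import Mathlib

section
/- Let H be a graded connected Hopf algebra over a field k of characteristic zero and α : H₁ → k a nonzero linear map. Let q : H → k be a linear form such that q(1) = 1, q restricted to H₁ equals α, and (q ⋆ q)(x) = 2^{|x|} q(x) for every homogeneous x ∈ H. Then q is an algebra character: q(xy) = q(x)q(y) for all x, y ∈ H. -/
open TensorProduct

/-- Convolution product of two linear forms on a coalgebra. -/
noncomputable def conv {k H : Type*} [CommSemiring k] [Semiring H] [Bialgebra k H]
    (f g : H →ₗ[k] k) : H →ₗ[k] k :=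
  (LinearMap.mul' k k) ∘ₗ (TensorProduct.map f g) ∘ₗ Coalgebra.comul

/-- A grading making a Hopf (bi)algebra graded and connected: the product and the coproduct
respect the grading and the degree-zero part is spanned by the unit. -/
structure GradedConnected (k H : Type*) [CommSemiring k] [Semiring H] [Bialgebra k H] where
  grading : ℕ → Submodule k H
  internal : DirectSum.IsInternal grading
  connected : grading 0 = Submodule.span k {1}
  mul_mem : ∀ {p q : ℕ} {x y : H}, x ∈ grading p → y ∈ grading q → x * y ∈ grading (p + q)
  comul_mem : ∀ {n : ℕ} {x : H}, x ∈ grading n →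
    Coalgebra.comul (R := k) x ∈
      ⨆ p ∈ Finset.range (n + 1),
        LinearMap.range (TensorProduct.mapIncl (grading p) (grading (n - p)))

/-!
For homogeneous `x ∈ H_m`, `y ∈ H_c` induct on `N = m + c`. Connectedness splits
`Δx = ∑ₚ tₚ` with `tₚ` of bidegree `(p, m - p)`, `t₀ = 1 ⊗ x` and `tₘ = x ⊗ 1`, and likewise
`Δy = ∑ᵣ sᵣ`. Under `q ⊗ q` every product `tₚ sᵣ` other than the corners `(1 ⊗ x)(1 ⊗ y)` and
`(x ⊗ 1)(y ⊗ 1)` only involves products of total degree `< N`, so it factors by induction.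
Comparing `(q ⊗ q)(Δx Δy) = 2ᴺ q(xy)` with `(q ⊗ q)(Δx) · (q ⊗ q)(Δy) = 2ᴺ q(x) q(y)` leaves
`(2ᴺ - 2)(q(xy) - q(x) q(y)) = 0`, and `2ᴺ ≠ 2` for `N ≥ 2`; degree `0` is `k · 1`.
-/

theorem iSupIndep.eq_of_eq_sum_add {ι κ R M : Type*} [Ring R] [AddCommGroup M] [Module R M]
    {A : ι → Submodule R M} (hA : iSupIndep A) {i : ι} {x y : M} (hx : x ∈ A i) (hy : y ∈ A i)
    {s : Finset κ} {d : κ → ι} {v : κ → M} (hd : ∀ j ∈ s, d j ≠ i)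
    (hv : ∀ j ∈ s, v j ∈ A (d j)) (h : x = ∑ j ∈ s, v j + y) : y = x := by
  have hsum : x - y ∈ ⨆ j ≠ i, A j := by
    rw [h, add_sub_cancel_right]
    exact Submodule.sum_mem _ fun j hj =>
      Submodule.mem_iSup_of_mem (d j) (Submodule.mem_iSup_of_mem (hd j hj) (hv j hj))
  have := Submodule.disjoint_def.mp (hA i) _ (sub_mem hx hy) hsum
  exact (sub_eq_zero.mp this).symm

noncomputable def idTensorCounit (k H : Type*) [CommSemiring k] [Semiring H] [Bialgebra k H] :
    H ⊗[k] H →ₗ[k] H :=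
  (TensorProduct.rid k H).toLinearMap ∘ₗ LinearMap.lTensor H Coalgebra.counit

noncomputable def counitTensorId (k H : Type*) [CommSemiring k] [Semiring H] [Bialgebra k H] :
    H ⊗[k] H →ₗ[k] H :=
  (TensorProduct.lid k H).toLinearMap ∘ₗ LinearMap.rTensor H Coalgebra.counit

section CounitProjections

variable {k H : Type*} [CommSemiring k] [Semiring H] [Bialgebra k H]

@[simp] theorem idTensorCounit_tmul (x y : H) :
    idTensorCounit k H (x ⊗ₜ y) = Coalgebra.counit (R := k) y • x := by
  simp [idTensorCounit]

@[simp] theorem counitTensorId_tmul (x y : H) :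
    counitTensorId k H (x ⊗ₜ y) = Coalgebra.counit (R := k) x • y := by
  simp [counitTensorId]

@[simp] theorem idTensorCounit_comul (x : H) : idTensorCounit k H (Coalgebra.comul x) = x := by
  simp [idTensorCounit, Coalgebra.lTensor_counit_comul]

@[simp] theorem counitTensorId_comul (x : H) : counitTensorId k H (Coalgebra.comul x) = x := by
  simp [counitTensorId, Coalgebra.rTensor_counit_comul]

end CounitProjections

noncomputable def formTensor {k H : Type*} [CommSemiring k] [AddCommMonoid H] [Module k H]
    (f g : H →ₗ[k] k) : H ⊗[k] H →ₗ[k] k :=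
  LinearMap.mul' k k ∘ₗ TensorProduct.map f g

@[simp] theorem formTensor_tmul {k H : Type*} [CommSemiring k] [AddCommMonoid H] [Module k H]
    (f g : H →ₗ[k] k) (x y : H) : formTensor f g (x ⊗ₜ y) = f x * g y := by
  simp [formTensor]

theorem conv_apply {k H : Type*} [CommSemiring k] [Semiring H] [Bialgebra k H]
    (f g : H →ₗ[k] k) (x : H) : conv f g x = formTensor f g (Coalgebra.comul x) :=
  rfl

namespace GradedConnected

section Semiring

variable {k H : Type*} [CommSemiring k] [Semiring H] [Bialgebra k H] (G : GradedConnected k H)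

abbrev bihomogeneous (a b : ℕ) : Submodule k (H ⊗[k] H) :=
  LinearMap.range (TensorProduct.mapIncl (G.grading a) (G.grading b))

variable {G}

@[elab_as_elim]
theorem bihomogeneous_induction {a b : ℕ} {motive : H ⊗[k] H → Prop} {t : H ⊗[k] H}
    (ht : t ∈ G.bihomogeneous a b) (zero : motive 0)
    (add : ∀ u v, motive u → motive v → motive (u + v))
    (tmul : ∀ x ∈ G.grading a, ∀ y ∈ G.grading b, motive (x ⊗ₜ y)) : motive t := by
  obtain ⟨u, rfl⟩ := ht
  induction u using TensorProduct.induction_on with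
  | zero => simpa using zero
  | tmul x y => exact tmul x x.2 y y.2
  | add u v hu hv => rw [map_add]; exact add _ _ hu hv

theorem exists_eq_smul_one_of_mem_grading_zero {x : H} (hx : x ∈ G.grading 0) :
    ∃ c : k, c • (1 : H) = x := by
  rwa [G.connected, Submodule.mem_span_singleton] at hx

theorem idTensorCounit_mem {a b : ℕ} {t : H ⊗[k] H} (ht : t ∈ G.bihomogeneous a b) :
    idTensorCounit k H t ∈ G.grading a := by
  refine bihomogeneous_induction ht (by simp) (fun u v hu hv => ?_) fun x hx y _ => ?_
  · rw [map_add]; exact add_mem hu hv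
  · rw [idTensorCounit_tmul]; exact Submodule.smul_mem _ _ hx

theorem counitTensorId_mem {a b : ℕ} {t : H ⊗[k] H} (ht : t ∈ G.bihomogeneous a b) :
    counitTensorId k H t ∈ G.grading b := by
  refine bihomogeneous_induction ht (by simp) (fun u v hu hv => ?_) fun x _ y hy => ?_
  · rw [map_add]; exact add_mem hu hv
  · rw [counitTensorId_tmul]; exact Submodule.smul_mem _ _ hy

theorem eq_tmul_one_of_mem {a : ℕ} {t : H ⊗[k] H} (ht : t ∈ G.bihomogeneous a 0) :
    t = idTensorCounit k H t ⊗ₜ 1 := by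
  refine bihomogeneous_induction ht (by simp) (fun u v hu hv => ?_) fun x _ y hy => ?_
  · rw [map_add, add_tmul, ← hu, ← hv]
  · obtain ⟨c, rfl⟩ := exists_eq_smul_one_of_mem_grading_zero hy
    simp [smul_tmul]

theorem eq_one_tmul_of_mem {b : ℕ} {t : H ⊗[k] H} (ht : t ∈ G.bihomogeneous 0 b) :
    t = 1 ⊗ₜ counitTensorId k H t := by
  refine bihomogeneous_induction ht (by simp) (fun u v hu hv => ?_) fun x hx y _ => ?_
  · rw [map_add, tmul_add, ← hu, ← hv]
  · obtain ⟨c, rfl⟩ := exists_eq_smul_one_of_mem_grading_zero hx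
    simp [smul_tmul]

end Semiring

section Ring

variable {k H : Type*} [CommRing k] [Ring H] [Bialgebra k H] {G : GradedConnected k H}

theorem exists_comul_eq_sum {m : ℕ} {x : H} (hx : x ∈ G.grading m) :
    ∃ t : ℕ → H ⊗[k] H, (∀ p, t p ∈ G.bihomogeneous p (m - p)) ∧
      t 0 = 1 ⊗ₜ x ∧ t m = x ⊗ₜ 1 ∧ Coalgebra.comul x = ∑ p ∈ Finset.range (m + 1), t p := by
  obtain ⟨t, ht⟩ := (Submodule.mem_iSup_finset_iff_exists_sum _ _).mp (G.comul_mem hx)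
  have hindep := G.internal.submodule_iSupIndep
  refine ⟨fun p => t p, fun p => (t p).2, ?_, ?_, ht.symm⟩
  -- `x = ∑ₚ (ε ⊗ id) tₚ` with `(ε ⊗ id) tₚ ∈ H_{m-p}`: only `p = 0` lands in degree `m`.
  · have h0 : (t 0 : H ⊗[k] H) ∈ G.bihomogeneous 0 m := (t 0).2
    refine (eq_one_tmul_of_mem h0).trans ?_
    congr 1
    refine hindep.eq_of_eq_sum_add hx (counitTensorId_mem h0) (s := Finset.range m)
      (d := fun p => m - (p + 1))
      (fun p hp => by have := Finset.mem_range.mp hp; omega)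
      (fun p _ => counitTensorId_mem (t (p + 1)).2) ?_
    rw [← Finset.sum_range_succ' (fun p => counitTensorId k H (t p)), ← map_sum, ht,
      counitTensorId_comul]
  · have hm' : (t m : H ⊗[k] H) ∈ G.bihomogeneous m 0 := Nat.sub_self m ▸ (t m).2
    refine (eq_tmul_one_of_mem hm').trans ?_
    congr 1
    refine hindep.eq_of_eq_sum_add hx (idTensorCounit_mem hm') (s := Finset.range m) (d := id)
      (fun p hp => (Finset.mem_range.mp hp).ne)
      (fun p _ => idTensorCounit_mem (t p).2) ?_
    rw [← Finset.sum_range_succ (fun p => idTensorCounit k H (t p)), ← map_sum, ht,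
      idTensorCounit_comul]

variable (q : H →ₗ[k] k)

theorem formTensor_mul_of_mem {N : ℕ}
    (ih : ∀ a b, a + b < N → ∀ x ∈ G.grading a, ∀ y ∈ G.grading b, q (x * y) = q x * q y)
    {a b c d : ℕ} (hac : a + c < N) (hbd : b + d < N) {u v : H ⊗[k] H}
    (hu : u ∈ G.bihomogeneous a b) (hv : v ∈ G.bihomogeneous c d) :
    formTensor q q (u * v) = formTensor q q u * formTensor q q v := by
  refine bihomogeneous_induction hu (by simp) (fun u₁ u₂ h₁ h₂ => ?_) fun x hx y hy => ?_
  · rw [add_mul, map_add, map_add, add_mul, h₁, h₂]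
  refine bihomogeneous_induction hv (by simp) (fun v₁ v₂ h₁ h₂ => ?_) fun z hz w hw => ?_
  · rw [mul_add, map_add, map_add, mul_add, h₁, h₂]
  rw [Algebra.TensorProduct.tmul_mul_tmul, formTensor_tmul, formTensor_tmul, formTensor_tmul,
    ih a c hac x hx z hz, ih b d hbd y hy w hw]
  ring

theorem formTensor_comul_mul_comul_sub {m c : ℕ} (hmc : 0 < m + c) (hq1 : q 1 = 1)
    (ih : ∀ a b, a + b < m + c → ∀ x ∈ G.grading a, ∀ y ∈ G.grading b,
      q (x * y) = q x * q y)
    {x y : H} (hx : x ∈ G.grading m) (hy : y ∈ G.grading c) :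
    formTensor q q (Coalgebra.comul x * Coalgebra.comul y)
        - formTensor q q (Coalgebra.comul x) * formTensor q q (Coalgebra.comul y)
      = 2 * (q (x * y) - q x * q y) := by
  obtain ⟨t, ht, ht0, htm, hΔx⟩ := exists_comul_eq_sum hx
  obtain ⟨s, hs, hs0, hsc, hΔy⟩ := exists_comul_eq_sum hy
  rw [hΔx, hΔy]
  simp only [Finset.sum_mul_sum, map_sum, ← Finset.sum_sub_distrib, ← Finset.sum_product']
  rw [Finset.sum_eq_add_of_mem (0, 0) (m, c) (by simp) (by simp)
    (by simp only [ne_eq, Prod.mk.injEq]; omega)]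
  · simp only [ht0, hs0, htm, hsc, Algebra.TensorProduct.tmul_mul_tmul, mul_one, one_mul,
      formTensor_tmul, hq1]
    ring
  rintro ⟨p, r⟩ hpr hne
  simp only [Finset.mem_product, Finset.mem_range, ne_eq, Prod.mk.injEq] at hpr hne
  exact sub_eq_zero.mpr (formTensor_mul_of_mem q ih (by omega) (by omega) (ht p) (hs r))

end Ring

section Multiplicativity

variable {k H : Type*} [CommRing k] [Ring H] [Bialgebra k H] (G : GradedConnected k H)
  {q : H →ₗ[k] k}

theorem map_mul_of_mem_grading_zero_left (hq1 : q 1 = 1) {x : H} (hx : x ∈ G.grading 0)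
    (y : H) : q (x * y) = q x * q y := by
  obtain ⟨a, rfl⟩ := exists_eq_smul_one_of_mem_grading_zero hx
  simp [hq1]

theorem map_mul_of_mem_grading_zero_right (hq1 : q 1 = 1) (x : H) {y : H}
    (hy : y ∈ G.grading 0) : q (x * y) = q x * q y := by
  obtain ⟨a, rfl⟩ := exists_eq_smul_one_of_mem_grading_zero hy
  simp [hq1, mul_comm]

theorem map_mul_of_forall_mem_grading
    (h : ∀ m c, ∀ x ∈ G.grading m, ∀ y ∈ G.grading c, q (x * y) = q x * q y) (x y : H) :
    q (x * y) = q x * q y := by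
  have hspan : ∀ z : H, z ∈ ⨆ i, G.grading i := by
    simp [G.internal.submodule_iSup_eq_top]
  refine Submodule.iSup_induction (motive := fun x => q (x * y) = q x * q y) _ (hspan x)
    (fun m x hx => ?_) (by simp) fun x₁ x₂ h₁ h₂ => ?_
  · refine Submodule.iSup_induction (motive := fun y => q (x * y) = q x * q y) _ (hspan y)
      (fun c y hy => h m c x hx y hy) (by simp) fun y₁ y₂ h₁ h₂ => ?_
    rw [mul_add, map_add, map_add, mul_add, h₁, h₂]
  · rw [add_mul, map_add, map_add, add_mul, h₁, h₂]

variable [IsDomain k] [CharZero k]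

theorem map_mul_of_mem_grading (hq1 : q 1 = 1)
    (hqconv : ∀ n, ∀ x ∈ G.grading n, conv q q x = 2 ^ n * q x) {m c : ℕ} {x y : H}
    (hx : x ∈ G.grading m) (hy : y ∈ G.grading c) : q (x * y) = q x * q y := by
  induction hN : m + c using Nat.strong_induction_on generalizing m c x y with
  | _ N ih =>
  subst hN
  obtain rfl | hm := Nat.eq_zero_or_pos m
  · exact map_mul_of_mem_grading_zero_left G hq1 hx y
  obtain rfl | hc := Nat.eq_zero_or_pos c
  · exact map_mul_of_mem_grading_zero_right G hq1 x hy
  have key := formTensor_comul_mul_comul_sub q (by omega) hq1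
    (fun a b hab x hx y hy => ih (a + b) hab hx hy rfl) hx hy
  rw [← Bialgebra.comul_mul, ← conv_apply, ← conv_apply, ← conv_apply,
    hqconv _ _ (G.mul_mem hx hy), hqconv _ _ hx, hqconv _ _ hy] at key
  have h2pow : (2 : k) ^ (m + c) - 2 ≠ 0 := by
    have : 2 ^ (m + c) ≠ 2 := by
      have := Nat.pow_le_pow_right two_pos (show 2 ≤ m + c by omega)
      omega
    exact_mod_cast sub_ne_zero.mpr (Nat.cast_injective.ne this : ((2 ^ (m + c) : ℕ) : k) ≠ 2)
  have hzero : ((2 : k) ^ (m + c) - 2) * (q (x * y) - q x * q y) = 0 := by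
    linear_combination key
  exact sub_eq_zero.mp ((mul_eq_zero.mp hzero).resolve_left h2pow)

end Multiplicativity

end GradedConnected

theorem stmt2_general {k H : Type*} [Field k] [CharZero k] [Ring H] [HopfAlgebra k H]
    (G : GradedConnected k H)
    (q : H →ₗ[k] k)
    (hq1 : q 1 = 1)
    (hqconv : ∀ n : ℕ, ∀ x ∈ G.grading n, conv q q x = 2 ^ n * q x) :
    ∀ x y : H, q (x * y) = q x * q y :=
  G.map_mul_of_forall_mem_grading fun _ _ _ hx _ hy => G.map_mul_of_mem_grading hq1 hqconv hx hy

/-- The inverse-factorial character of a graded connected Hopf algebra is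
multiplicative. -/
theorem stmt2 {k H : Type*} [Field k] [CharZero k] [Ring H] [HopfAlgebra k H]
    (G : GradedConnected k H)
    (α : ↥(G.grading 1) →ₗ[k] k) (hα : α ≠ 0)
    (q : H →ₗ[k] k)
    (hq1 : q 1 = 1)
    (hqα : ∀ x : ↥(G.grading 1), q x = α x)
    (hqconv : ∀ n : ℕ, ∀ x ∈ G.grading n, conv q q x = 2 ^ n * q x) :
    ∀ x y : H, q (x * y) = q x * q y :=
  stmt2_general G q hq1 hqconv
end

section
/- Let H be a graded connected Hopf algebra over a field k of characteristic zero, α : H₁ → k a nonzero linear map, and q = q_α the associated inverse-factorial character. For h ∈ k let q_h : H → k be the linear form defined on homogeneous elements by q_h(y) := h^{|y|} q(y). Then for any h, k' ∈ k, the convolution identity (q_h ⋆ q_{k'})(x) = (h + k')^{|x|} q(x) holds for every homogeneous x ∈ H; equivalently, in Sweedler notation with homogeneous components, q(x)(h+k')^{|x|} = Σ_{(x)} q(x₁)q(x₂) h^{|x₁|} (k')^{|x₂|}. -/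
open TensorProduct

/-!
Write `q_p := q ∘ π_p`, with `π_p` the projection onto `H_p`. Since `q_h ⋆ q_{k'}` is
`∑ h^p k'^{n-p} q_p ⋆ q_{n-p}` in degree `n`, the theorem reduces to the divided-power relations
`q_a ⋆ q_b = C(a+b, a) q_{a+b}` in the convolution algebra, proved by induction on `n = a + b`.
Connectedness gives `q_0 ⋆ q_n = q_n ⋆ q_0 = q_n`. For `0 < p < n`, associativity of
`(q_1 ⋆ q_{p-1}) ⋆ q_{n-p}` and the induction hypothesis give
`n (q_p ⋆ q_{n-p}) = C(n,p) (q_1 ⋆ q_{n-1})`. Summing over `p` and comparing with `q ⋆ q = 2^n q`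
in degree `n` yields `(2^n - 2)(q_1 ⋆ q_{n-1} - n q_n) = 0`, which settles `n ≥ 2` in
characteristic zero.
-/

open WithConv

lemma sum_range_choose_add_two_succ {R : Type*} [CommRing R] (j : ℕ) :
    ∑ i ∈ Finset.range (j + 1), ((j + 2).choose (i + 1) : R) = 2 ^ (j + 2) - 2 := by
  have h := congrArg (Nat.cast : ℕ → R) (Nat.sum_range_choose (j + 2))
  rw [Finset.sum_range_succ, Finset.sum_range_succ'] at h
  push_cast at h
  simp only [Nat.choose_zero_right, Nat.choose_self, Nat.cast_one] at h
  linear_combination h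

lemma two_pow_add_two_sub_two_ne_zero {R : Type*} [Ring R] [CharZero R] (j : ℕ) :
    (2 : R) ^ (j + 2) - 2 ≠ 0 := by
  rw [sub_ne_zero]
  exact_mod_cast (Nat.pow_lt_pow_right (by norm_num) (by omega : 1 < j + 2)).ne'

namespace GradedConnected

section Bialgebra

variable {k H : Type*} [CommSemiring k] [Semiring H] [Bialgebra k H] (G : GradedConnected k H)

noncomputable def proj (p : ℕ) : H →ₗ[k] H :=
  letI := G.internal.chooseDecomposition
  (G.grading p).subtype ∘ₗ DirectSum.component k ℕ (fun i => G.grading i) p ∘ₗ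
    (DirectSum.decomposeLinearEquiv G.grading).toLinearMap

lemma proj_mem (p : ℕ) (y : H) : G.proj p y ∈ G.grading p := by
  simp [proj]

lemma proj_of_mem {m p : ℕ} {y : H} (hy : y ∈ G.grading m) :
    G.proj p y = if m = p then y else 0 := by
  let := G.internal.chooseDecomposition
  change ((DirectSum.decompose G.grading y) p : H) = _
  split_ifs with hmp
  · exact DirectSum.decompose_of_mem_same _ (hmp ▸ hy)
  · exact DirectSum.decompose_of_mem_ne _ hy hmp

lemma linearMap_ext {M : Type*} [AddCommMonoid M] [Module k M] {f g : H →ₗ[k] M}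
    (h : ∀ m, ∀ y ∈ G.grading m, f y = g y) : f = g := by
  refine LinearMap.eqLocus_eq_top.mp (eq_top_iff.mpr ?_)
  rw [← G.internal.submodule_iSup_eq_top]
  exact iSup_le fun m y hy => h m y hy

lemma map_proj_of_mem_range {p r : ℕ} (a b : ℕ) {T : H ⊗[k] H}
    (hT : T ∈ LinearMap.range (mapIncl (G.grading p) (G.grading r))) :
    map (G.proj a) (G.proj b) T = if p = a ∧ r = b then T else 0 := by
  obtain ⟨t, rfl⟩ := hT
  induction t with
  | zero => simp
  | tmul y z =>
    simp only [mapIncl, map_tmul, Submodule.subtype_apply, G.proj_of_mem y.2, G.proj_of_mem z.2]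
    split_ifs <;> simp_all
  | add u v hu hv => simp only [map_add, hu, hv]; split_ifs <;> simp

lemma map_proj_comul_eq_zero {m a b : ℕ} {y : H} (hy : y ∈ G.grading m) (hab : a + b ≠ m) :
    map (G.proj a) (G.proj b) (Coalgebra.comul (R := k) y) = 0 := by
  obtain ⟨μ, hμ⟩ := (Submodule.mem_iSup_finset_iff_exists_sum _ _).mp (G.comul_mem hy)
  rw [← hμ, map_sum]
  refine Finset.sum_eq_zero fun p hp => ?_
  rw [G.map_proj_of_mem_range a b (μ p).2, if_neg]
  have := Finset.mem_range.mp hp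
  omega

lemma sum_map_proj_comul {m : ℕ} {y : H} (hy : y ∈ G.grading m) :
    ∑ p ∈ Finset.range (m + 1), map (G.proj p) (G.proj (m - p)) (Coalgebra.comul (R := k) y) =
      Coalgebra.comul y := by
  obtain ⟨μ, hμ⟩ := (Submodule.mem_iSup_finset_iff_exists_sum _ _).mp (G.comul_mem hy)
  rw [← hμ]
  simp only [map_sum, G.map_proj_of_mem_range _ _ (μ _).2]
  rw [Finset.sum_comm]
  refine Finset.sum_congr rfl fun p hp => ?_
  rw [Finset.sum_eq_single_of_mem p hp fun x _ hxp => if_neg fun h => hxp h.1.symm,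
    if_pos ⟨rfl, rfl⟩]

lemma toConv_comp_proj_mul_apply (f g : H →ₗ[k] k) (a b : ℕ) (y : H) :
    (toConv (f ∘ₗ G.proj a) * toConv (g ∘ₗ G.proj b)) y =
      LinearMap.mul' k k (map f g (map (G.proj a) (G.proj b) (Coalgebra.comul y))) := by
  rw [LinearMap.convMul_apply, ofConv_toConv, ofConv_toConv, map_comp, LinearMap.comp_apply]

lemma toConv_comp_proj_mul_apply_of_add_ne (f g : H →ₗ[k] k) {m a b : ℕ} {y : H}
    (hy : y ∈ G.grading m) (hab : a + b ≠ m) :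
    (toConv (f ∘ₗ G.proj a) * toConv (g ∘ₗ G.proj b)) y = 0 := by
  rw [toConv_comp_proj_mul_apply, G.map_proj_comul_eq_zero hy hab, map_zero, map_zero]

lemma conv_apply_eq_sum (f g : H →ₗ[k] k) {m : ℕ} {y : H} (hy : y ∈ G.grading m) :
    conv f g y =
      ∑ p ∈ Finset.range (m + 1), (toConv (f ∘ₗ G.proj p) * toConv (g ∘ₗ G.proj (m - p))) y := by
  simp only [toConv_comp_proj_mul_apply, ← map_sum, G.sum_map_proj_comul hy]
  rfl

lemma proj_comp_proj (a b : ℕ) :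
    G.proj a ∘ₗ G.proj b = if b = a then G.proj b else 0 := by
  ext y
  rw [LinearMap.comp_apply, G.proj_of_mem (G.proj_mem b y)]
  split_ifs <;> rfl

lemma comp_proj_zero (f : H →ₗ[k] k) :
    f ∘ₗ G.proj 0 = f 1 • (Coalgebra.counit ∘ₗ G.proj 0) := by
  ext y
  obtain ⟨c, hc⟩ := Submodule.mem_span_singleton.mp (G.connected ▸ G.proj_mem 0 y)
  simp [← hc, Bialgebra.counit_one, mul_comm]

lemma counit_comp_proj_zero_mul (g : H →ₗ[k] k) (b : ℕ) :
    toConv (Coalgebra.counit ∘ₗ G.proj 0) * toConv (g ∘ₗ G.proj b) = toConv (g ∘ₗ G.proj b) := by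
  ext1
  refine G.linearMap_ext fun m y hy => ?_
  rcases eq_or_ne b m with rfl | hbm
  · calc (toConv (Coalgebra.counit ∘ₗ G.proj 0) * toConv (g ∘ₗ G.proj b)) y
        = ∑ p ∈ Finset.range (b + 1), (toConv (Coalgebra.counit ∘ₗ G.proj p) *
            toConv ((g ∘ₗ G.proj b) ∘ₗ G.proj (b - p))) y := by
          rw [Finset.sum_eq_single_of_mem 0 (by simp)]
          · rw [Nat.sub_zero, LinearMap.comp_assoc, G.proj_comp_proj, if_pos rfl]
          · intro p hp hp0
            have := Finset.mem_range.mp hp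
            rw [LinearMap.comp_assoc, G.proj_comp_proj, if_neg (by omega)]
            simp
      _ = (1 * toConv (g ∘ₗ G.proj b)) y := by
          rw [← G.conv_apply_eq_sum _ _ hy, LinearMap.convOne_def, Algebra.linearMap_self,
            LinearMap.id_comp]
          rfl
      _ = (g ∘ₗ G.proj b) y := by rw [one_mul]
  · rw [G.toConv_comp_proj_mul_apply_of_add_ne _ _ hy (by omega)]
    simp [G.proj_of_mem hy, hbm.symm]

lemma mul_counit_comp_proj_zero (g : H →ₗ[k] k) (a : ℕ) :
    toConv (g ∘ₗ G.proj a) * toConv (Coalgebra.counit ∘ₗ G.proj 0) = toConv (g ∘ₗ G.proj a) := by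
  ext1
  refine G.linearMap_ext fun m y hy => ?_
  rcases eq_or_ne a m with rfl | ham
  · calc (toConv (g ∘ₗ G.proj a) * toConv (Coalgebra.counit ∘ₗ G.proj 0)) y
        = ∑ p ∈ Finset.range (a + 1), (toConv ((g ∘ₗ G.proj a) ∘ₗ G.proj p) *
            toConv (Coalgebra.counit ∘ₗ G.proj (a - p))) y := by
          rw [Finset.sum_eq_single_of_mem a (by simp)]
          · rw [Nat.sub_self, LinearMap.comp_assoc, G.proj_comp_proj, if_pos rfl]
          · intro p _ hpa
            rw [LinearMap.comp_assoc, G.proj_comp_proj, if_neg hpa]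
            simp
      _ = (toConv (g ∘ₗ G.proj a) * 1) y := by
          rw [← G.conv_apply_eq_sum _ _ hy, LinearMap.convOne_def, Algebra.linearMap_self,
            LinearMap.id_comp]
          rfl
      _ = (g ∘ₗ G.proj a) y := by rw [mul_one]
  · rw [G.toConv_comp_proj_mul_apply_of_add_ne _ _ hy (by omega)]
    simp [G.proj_of_mem hy, ham.symm]

lemma comp_proj_zero_mul (f g : H →ₗ[k] k) (b : ℕ) :
    toConv (f ∘ₗ G.proj 0) * toConv (g ∘ₗ G.proj b) = f 1 • toConv (g ∘ₗ G.proj b) := by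
  rw [comp_proj_zero, toConv_smul, smul_mul_assoc, counit_comp_proj_zero_mul]

lemma mul_comp_proj_zero (f g : H →ₗ[k] k) (a : ℕ) :
    toConv (f ∘ₗ G.proj a) * toConv (g ∘ₗ G.proj 0) = g 1 • toConv (f ∘ₗ G.proj a) := by
  rw [G.comp_proj_zero g, toConv_smul, mul_smul_comm, mul_counit_comp_proj_zero]

lemma comp_proj_eq_smul {f q : H →ₗ[k] k} {c : k}
    (hf : ∀ n : ℕ, ∀ y ∈ G.grading n, f y = c ^ n * q y) (p : ℕ) :
    f ∘ₗ G.proj p = c ^ p • (q ∘ₗ G.proj p) := by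
  ext y
  exact hf p _ (G.proj_mem p y)

end Bialgebra

section CharZero

variable {k H : Type*} [Field k] [CharZero k] [Semiring H] [Bialgebra k H] (G : GradedConnected k H)
  {q : H →ₗ[k] k}

lemma natCast_smul_comp_proj_mul {n : ℕ}
    (IH : ∀ a b, a + b < n → toConv (q ∘ₗ G.proj a) * toConv (q ∘ₗ G.proj b) =
      ((a + b).choose a : k) • toConv (q ∘ₗ G.proj (a + b)))
    {p : ℕ} (hp : 1 ≤ p) (hpn : p < n) :
    (n : k) • (toConv (q ∘ₗ G.proj p) * toConv (q ∘ₗ G.proj (n - p))) =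
      (n.choose p : k) • (toConv (q ∘ₗ G.proj 1) * toConv (q ∘ₗ G.proj (n - 1))) := by
  obtain ⟨i, rfl⟩ : ∃ i, p = i + 1 := ⟨p - 1, by omega⟩
  obtain ⟨m, rfl⟩ : ∃ m, n = m + 1 := ⟨n - 1, by omega⟩
  have hleft := IH 1 i (by omega)
  rw [add_comm 1 i, Nat.choose_one_right] at hleft
  have hright := IH i (m + 1 - (i + 1)) (by omega)
  rw [show i + (m + 1 - (i + 1)) = m by omega] at hright
  have hassoc := mul_assoc (toConv (q ∘ₗ G.proj 1)) (toConv (q ∘ₗ G.proj i))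
    (toConv (q ∘ₗ G.proj (m + 1 - (i + 1))))
  rw [hleft, hright, smul_mul_assoc, mul_smul_comm] at hassoc
  refine smul_right_injective _ (Nat.cast_ne_zero.mpr i.succ_ne_zero : ((i + 1 : ℕ) : k) ≠ 0) ?_
  simp only [Nat.add_sub_cancel]
  rw [smul_comm, hassoc, smul_smul, smul_smul, ← Nat.cast_mul, ← Nat.cast_mul,
    Nat.add_one_mul_choose_eq, mul_comm]

lemma comp_proj_one_mul (hq1 : q 1 = 1)
    (hqconv : ∀ n : ℕ, ∀ x ∈ G.grading n, conv q q x = 2 ^ n * q x) {n : ℕ}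
    (IH : ∀ a b, a + b < n → toConv (q ∘ₗ G.proj a) * toConv (q ∘ₗ G.proj b) =
      ((a + b).choose a : k) • toConv (q ∘ₗ G.proj (a + b)))
    (hn : 2 ≤ n) :
    toConv (q ∘ₗ G.proj 1) * toConv (q ∘ₗ G.proj (n - 1)) = (n : k) • toConv (q ∘ₗ G.proj n) := by
  obtain ⟨j, rfl⟩ : ∃ j, n = j + 2 := ⟨n - 2, by omega⟩
  ext1
  refine G.linearMap_ext fun m y hy => ?_
  rcases eq_or_ne m (j + 2) with rfl | hm
  swap
  · rw [G.toConv_comp_proj_mul_apply_of_add_ne _ _ hy (by omega)]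
    simp [G.proj_of_mem hy, hm]
  have hsum := G.conv_apply_eq_sum q q hy
  rw [hqconv _ _ hy, Finset.sum_range_succ, Finset.sum_range_succ', Nat.sub_self, Nat.sub_zero,
    G.comp_proj_zero_mul, G.mul_comp_proj_zero, hq1, one_smul] at hsum
  have hmid : ∀ i ∈ Finset.range (j + 1),
      ((j + 2 : ℕ) : k) * (toConv (q ∘ₗ G.proj (i + 1)) * toConv (q ∘ₗ G.proj (j + 2 - (i + 1)))) y =
        ((j + 2).choose (i + 1) : k) *
          (toConv (q ∘ₗ G.proj 1) * toConv (q ∘ₗ G.proj (j + 2 - 1))) y := fun i hi =>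
    congr($(G.natCast_smul_comp_proj_mul IH (Nat.le_add_left 1 i)
      (by have := Finset.mem_range.mp hi; omega)) y)
  have hP := congrArg (((j + 2 : ℕ) : k) * ·) hsum
  simp only [mul_add, Finset.mul_sum, Finset.sum_congr rfl hmid, ← Finset.sum_mul,
    sum_range_choose_add_two_succ] at hP
  simp only [LinearMap.comp_apply, G.proj_of_mem hy, if_pos] at hP
  rw [ofConv_smul, LinearMap.smul_apply, ofConv_toConv, LinearMap.comp_apply, G.proj_of_mem hy,
    if_pos rfl, smul_eq_mul]
  refine mul_left_cancel₀ (two_pow_add_two_sub_two_ne_zero (R := k) j) ?_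
  linear_combination -hP

theorem comp_proj_mul_comp_proj (hq1 : q 1 = 1)
    (hqconv : ∀ n : ℕ, ∀ x ∈ G.grading n, conv q q x = 2 ^ n * q x) (a b : ℕ) :
    toConv (q ∘ₗ G.proj a) * toConv (q ∘ₗ G.proj b) =
      ((a + b).choose a : k) • toConv (q ∘ₗ G.proj (a + b)) := by
  obtain ⟨n, hn⟩ : ∃ n, a + b = n := ⟨_, rfl⟩
  induction n using Nat.strong_induction_on generalizing a b with
  | _ n IH =>
  have IH' : ∀ a b, a + b < n → toConv (q ∘ₗ G.proj a) * toConv (q ∘ₗ G.proj b) =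
      ((a + b).choose a : k) • toConv (q ∘ₗ G.proj (a + b)) := fun a b h => IH _ h a b rfl
  subst hn
  rcases Nat.eq_zero_or_pos a with rfl | ha
  · simp [G.comp_proj_zero_mul, hq1]
  rcases Nat.eq_zero_or_pos b with rfl | hb
  · simp [G.mul_comp_proj_zero, hq1]
  have h := G.natCast_smul_comp_proj_mul IH' ha (by omega : a < a + b)
  rw [Nat.add_sub_cancel_left, G.comp_proj_one_mul hq1 hqconv IH' (by omega), smul_smul,
    mul_comm, ← smul_smul] at h
  exact smul_right_injective _ (Nat.cast_ne_zero.mpr (by omega)) h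

end CharZero

end GradedConnected

theorem stmt4_general {k H : Type*} [Field k] [CharZero k] [Ring H] [HopfAlgebra k H]
    (G : GradedConnected k H)
    (q : H →ₗ[k] k)
    (hq1 : q 1 = 1)
    (hqconv : ∀ n : ℕ, ∀ x ∈ G.grading n, conv q q x = 2 ^ n * q x)
    (h k' : k) (qh qk : H →ₗ[k] k)
    (hqh : ∀ n : ℕ, ∀ y ∈ G.grading n, qh y = h ^ n * q y)
    (hqk : ∀ n : ℕ, ∀ y ∈ G.grading n, qk y = k' ^ n * q y) :
    ∀ n : ℕ, ∀ x ∈ G.grading n, conv qh qk x = (h + k') ^ n * q x := by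
  intro n x hx
  rw [G.conv_apply_eq_sum _ _ hx, add_pow, Finset.sum_mul]
  refine Finset.sum_congr rfl fun p hp => ?_
  have hpn : p + (n - p) = n := Nat.add_sub_cancel' (Finset.mem_range_succ_iff.mp hp)
  rw [G.comp_proj_eq_smul hqh, G.comp_proj_eq_smul hqk, toConv_smul, toConv_smul, smul_mul_smul,
    G.comp_proj_mul_comp_proj hq1 hqconv, hpn]
  simp only [ofConv_smul, LinearMap.smul_apply, LinearMap.comp_apply, G.proj_of_mem hx,
    ↓reduceIte, smul_eq_mul]
  ring

/-- Hopf-algebraic binomial formula: for `q_h(y) := h^{|y|} q(y)` one has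
`(q_h ⋆ q_{k'})(x) = (h+k')^{|x|} q(x)` on homogeneous elements. -/
theorem stmt4 {k H : Type*} [Field k] [CharZero k] [Ring H] [HopfAlgebra k H]
    (G : GradedConnected k H)
    (α : ↥(G.grading 1) →ₗ[k] k) (hα : α ≠ 0)
    (q : H →ₗ[k] k)
    (hq1 : q 1 = 1)
    (hqα : ∀ x : ↥(G.grading 1), q x = α x)
    (hqconv : ∀ n : ℕ, ∀ x ∈ G.grading n, conv q q x = 2 ^ n * q x)
    (h k' : k) (qh qk : H →ₗ[k] k)
    (hqh : ∀ n : ℕ, ∀ y ∈ G.grading n, qh y = h ^ n * q y)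
    (hqk : ∀ n : ℕ, ∀ y ∈ G.grading n, qk y = k' ^ n * q y) :
    ∀ n : ℕ, ∀ x ∈ G.grading n, conv qh qk x = (h + k') ^ n * q x :=
  stmt4_general G q hq1 hqconv h k' qh qk hqh hqk
end

section
/- Let (H, B) and (H', B') be commutative combinatorial Hopf algebras over ℝ and let Φ : (H, B) → (H', B') be a combinatorial Hopf algebra morphism. If X' = (X'_{st})_{s,t∈ℝ} is a γ-regular H'-rough path for some γ ∈ (0,1], then the pull-back X_{st} := X'_{st} ∘ Φ is a γ-regular H-rough path. -/
open TensorProduct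

/-- A combinatorial Hopf algebra over `ℝ`: a graded connected Hopf algebra together with a
basis `b` of homogeneous elements whose graded pieces have at most exponentially growing
(finite) cardinality, and whose structure constants for the product and the coproduct are
nonnegative integers. -/
structure CombinatorialHopf (H : Type*) [Ring H] [HopfAlgebra ℝ H] (ι : Type*) extends
    GradedConnected ℝ H where
  b : Module.Basis ι ℝ H
  deg : ι → ℕ
  homog : ∀ i : ι, b i ∈ grading (deg i)
  fin : ∀ n : ℕ, Finite {i : ι // deg i = n}
  growth : ∃ B C : ℝ, 0 < B ∧ 0 < C ∧
    ∀ n : ℕ, (Nat.card {i : ι // deg i = n} : ℝ) ≤ B * C ^ n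
  mul_int : ∀ i j ρ : ι, ∃ m : ℕ, (b.repr (b i * b j)) ρ = (m : ℝ)
  comul_int : ∀ ρ i j : ι, ∃ m : ℕ,
    ((b.tensorProduct b).repr (Coalgebra.comul (R := ℝ) (b ρ))) (i, j) = (m : ℝ)

/-- A combinatorial Hopf algebra is non-degenerate if the basis elements which are primitive
are exactly those of degree one (`B ∩ Prim(H) = B₁`). -/
def CombinatorialHopf.Nondegenerate {H : Type*} [Ring H] [HopfAlgebra ℝ H] {ι : Type*}
    (Ch : CombinatorialHopf H ι) : Prop :=
  ∀ i : ι,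
    (Coalgebra.comul (R := ℝ) (Ch.b i) = Ch.b i ⊗ₜ[ℝ] 1 + 1 ⊗ₜ[ℝ] Ch.b i) ↔ Ch.deg i = 1

/-- A `γ`-regular `H`-rough path for a combinatorial Hopf algebra `(H, B)`. -/
def IsRoughPath {H : Type*} [CommRing H] [HopfAlgebra ℝ H] {ι : Type*}
    (Ch : CombinatorialHopf H ι) (γ : ℝ) (X : ℝ → ℝ → (H →ₗ[ℝ] ℝ)) : Prop :=
  (∀ s t : ℝ, X s t 1 = 1) ∧
  (∀ s t : ℝ, ∀ x y : H, X s t (x * y) = X s t x * X s t y) ∧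
  (∀ s u t : ℝ, ∀ x : H, conv (X s u) (X u t) x = X s t x) ∧
  (∀ i : ι, ∃ C : ℝ, ∀ s t : ℝ, s ≠ t →
    |X s t (Ch.b i)| ≤ C * |t - s| ^ (γ * (Ch.deg i : ℝ)))

/-- A `γ`-regular `N`-truncated `H`-rough path: the defining properties are only required
in degrees at most `N`. -/
def IsTruncRoughPath {H : Type*} [CommRing H] [HopfAlgebra ℝ H] {ι : Type*}
    (Ch : CombinatorialHopf H ι) (γ : ℝ) (N : ℕ) (X : ℝ → ℝ → (H →ₗ[ℝ] ℝ)) : Prop :=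
  (∀ s t : ℝ, X s t 1 = 1) ∧
  (∀ s t : ℝ, ∀ p q : ℕ, p + q ≤ N → ∀ x ∈ Ch.grading p, ∀ y ∈ Ch.grading q,
    X s t (x * y) = X s t x * X s t y) ∧
  (∀ s u t : ℝ, ∀ n : ℕ, n ≤ N → ∀ x ∈ Ch.grading n,
    conv (X s u) (X u t) x = X s t x) ∧
  (∀ i : ι, Ch.deg i ≤ N → ∃ C : ℝ, ∀ s t : ℝ, s ≠ t →
    |X s t (Ch.b i)| ≤ C * |t - s| ^ (γ * (Ch.deg i : ℝ)))

/-!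
Since `Φ` is an algebra and a coalgebra morphism, multiplicativity and Chen's relation
`X_{su} ⋆ X_{ut} = X_{st}` pull back along it. For regularity, `Φ` preserves degrees, so the
image of a basis element of degree `n` is a finite combination of basis elements of `H'` of
degree `n`, and its bound is the same combination of theirs.
-/

theorem Module.Basis.repr_eq_zero_of_mem_of_ne {R M ι κ : Type*} [Ring R] [AddCommGroup M]
    [Module R M] [DecidableEq κ] {𝒜 : κ → Submodule R M} (h𝒜 : DirectSum.IsInternal 𝒜)
    (b : Module.Basis ι R M) {deg : ι → κ} (hb : ∀ i, b i ∈ 𝒜 (deg i))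
    {n : κ} {x : M} (hx : x ∈ 𝒜 n) {j : ι} (hj : deg j ≠ n) : b.repr x j = 0 := by
  let _ : DirectSum.Decomposition 𝒜 := h𝒜.chooseDecomposition
  let π : M →ₗ[R] M := (𝒜 (deg j)).subtype ∘ₗ DirectSum.component R κ (fun i => 𝒜 i) (deg j) ∘ₗ
    (DirectSum.decomposeLinearEquiv 𝒜).toLinearMap
  -- `b.coord j` factors through the projection onto `𝒜 (deg j)`: both agree on the basis.
  have hπ (y : M) : π y = DirectSum.decompose 𝒜 y (deg j) := rfl
  have hcoord : b.coord j ∘ₗ π = b.coord j := b.ext fun k => by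
    by_cases hk : deg k = deg j
    · simp [hπ, DirectSum.decompose_of_mem_same 𝒜 (hk ▸ hb k)]
    · have hkj : k ≠ j := fun h => hk (congrArg deg h)
      simp [hπ, DirectSum.decompose_of_mem_ne 𝒜 (hb k) hk, hkj]
  simpa [hπ, DirectSum.decompose_of_mem_ne 𝒜 hx (Ne.symm hj)] using
    (LinearMap.congr_fun hcoord x).symm

theorem conv_comp_coalgHom {k H H' : Type*} [CommSemiring k] [Semiring H] [Bialgebra k H]
    [Semiring H'] [Bialgebra k H'] (f g : H' →ₗ[k] k) (Φ : H →ₗc[k] H') :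
    conv (f ∘ₗ (Φ : H →ₗ[k] H')) (g ∘ₗ (Φ : H →ₗ[k] H')) = conv f g ∘ₗ (Φ : H →ₗ[k] H') := by
  simp only [conv, TensorProduct.map_comp, LinearMap.comp_assoc, CoalgHomClass.map_comp_comul]

namespace CombinatorialHopf

variable {H ι : Type*} [Ring H] [HopfAlgebra ℝ H] (Ch : CombinatorialHopf H ι)

theorem deg_eq_of_mem_support_repr {n : ℕ} {x : H} (hx : x ∈ Ch.grading n) {j : ι}
    (hj : j ∈ (Ch.b.repr x).support) : Ch.deg j = n := by
  by_contra hne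
  exact Finsupp.mem_support_iff.mp hj (Ch.b.repr_eq_zero_of_mem_of_ne Ch.internal Ch.homog hx hne)

theorem exists_bound_of_mem_grading {γ : ℝ} {X : ℝ → ℝ → (H →ₗ[ℝ] ℝ)}
    (hX : ∀ i : ι, ∃ C : ℝ, ∀ s t : ℝ, s ≠ t →
      |X s t (Ch.b i)| ≤ C * |t - s| ^ (γ * (Ch.deg i : ℝ)))
    {n : ℕ} {x : H} (hx : x ∈ Ch.grading n) :
    ∃ C : ℝ, ∀ s t : ℝ, s ≠ t → |X s t x| ≤ C * |t - s| ^ (γ * (n : ℝ)) := by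
  choose C hC using hX
  have hexpand (f : H →ₗ[ℝ] ℝ) :
      f x = ∑ j ∈ (Ch.b.repr x).support, Ch.b.repr x j * f (Ch.b j) := by
    conv_lhs => rw [← Ch.b.linearCombination_repr x]
    simp only [Finsupp.linearCombination_apply, Finsupp.sum, map_sum, map_smul, smul_eq_mul]
  set c := Ch.b.repr x
  refine ⟨∑ j ∈ c.support, |c j| * |C j|, fun s t hst => ?_⟩
  have hterm (j : ι) (hj : j ∈ c.support) :
      |c j * X s t (Ch.b j)| ≤ |c j| * |C j| * |t - s| ^ (γ * (n : ℝ)) := by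
    rw [abs_mul, mul_assoc, ← Ch.deg_eq_of_mem_support_repr hx hj]
    gcongr
    exact (hC j s t hst).trans (by gcongr; exact le_abs_self _)
  calc |X s t x| ≤ ∑ j ∈ c.support, |c j * X s t (Ch.b j)| :=
        hexpand (X s t) ▸ Finset.abs_sum_le_sum_abs _ _
    _ ≤ ∑ j ∈ c.support, |c j| * |C j| * |t - s| ^ (γ * (n : ℝ)) := Finset.sum_le_sum hterm
    _ = (∑ j ∈ c.support, |c j| * |C j|) * |t - s| ^ (γ * (n : ℝ)) := by rw [Finset.sum_mul]

end CombinatorialHopf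

theorem stmt8_general {H H' : Type*} [CommRing H] [HopfAlgebra ℝ H] [CommRing H'] [HopfAlgebra ℝ H']
    {ι ι' : Type*} (Ch : CombinatorialHopf H ι) (Ch' : CombinatorialHopf H' ι')
    (Φ : H →ₐc[ℝ] H')
    -- `Φ` is a combinatorial morphism: degree-preserving with nonnegative integer matrix:
    (hdeg : ∀ n : ℕ, ∀ x ∈ Ch.grading n, Φ x ∈ Ch'.grading n)
    (γ : ℝ)
    (X' : ℝ → ℝ → (H' →ₗ[ℝ] ℝ)) (hX' : IsRoughPath Ch' γ X') :
    IsRoughPath Ch γ (fun s t => (X' s t) ∘ₗ (Φ : H →ₗ[ℝ] H')) := by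
  obtain ⟨hunit, hmul, hchen, hreg⟩ := hX'
  refine ⟨fun s t => ?_, fun s t x y => ?_, fun s u t x => ?_, fun i => ?_⟩
  · simpa using hunit s t
  · simpa using hmul s t (Φ x) (Φ y)
  · exact (LinearMap.congr_fun (conv_comp_coalgHom _ _ (Φ : H →ₗc[ℝ] H')) x).trans
      (hchen s u t (Φ x))
  · exact Ch'.exists_bound_of_mem_grading hreg (hdeg _ _ (Ch.homog i))

/-- The pull-back of a `γ`-regular `H'`-rough path along a combinatorial
Hopf algebra morphism `Φ : (H, B) → (H', B')` is a `γ`-regular `H`-rough path. -/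
theorem stmt8 {H H' : Type*} [CommRing H] [HopfAlgebra ℝ H] [CommRing H'] [HopfAlgebra ℝ H']
    {ι ι' : Type*} (Ch : CombinatorialHopf H ι) (Ch' : CombinatorialHopf H' ι')
    (Φ : H →ₐc[ℝ] H')
    -- `Φ` is a combinatorial morphism: degree-preserving with nonnegative integer matrix:
    (hdeg : ∀ n : ℕ, ∀ x ∈ Ch.grading n, Φ x ∈ Ch'.grading n)
    (hmat : ∀ (i : ι) (j : ι'), ∃ m : ℕ, (Ch'.b.repr (Φ (Ch.b i))) j = (m : ℝ))
    (γ : ℝ) (hγ0 : 0 < γ) (hγ1 : γ ≤ 1)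
    (X' : ℝ → ℝ → (H' →ₗ[ℝ] ℝ)) (hX' : IsRoughPath Ch' γ X') :
    IsRoughPath Ch γ (fun s t => (X' s t) ∘ₗ (Φ : H →ₗ[ℝ] H')) :=
  stmt8_general Ch Ch' Φ hdeg γ X' hX'
end

section
/- Let γ ∈ (0,1], N := ⌊1/γ⌋, and suppose c_γ > 0 is a constant such that Σ_{k=0}^n 1/((k!)^γ ((n−k)!)^γ) ≤ c_γ · 2^{γn}/(n!)^γ for every integer n ≥ 0. Define u : ℕ_{≥1} → ℝ by u(n) := 1/n! for 1 ≤ n ≤ N and u(n) := (2^{γn} − 2)^{−1} Σ_{k=1}^{n−1} u(k) u(n−k) for n ≥ N + 1. Then with C_γ := max(1, 2^{γ(N+1)} c_γ/(2^{γ(N+1)} − 2)), the estimate u(n) ≤ C_γ^{n−1}/(n!)^γ holds for all n ≥ 1. -/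
/-!
Strong induction on `0 ≤ u n ≤ C^(n-1) / (n!)^γ`. For `n ≤ N` this is `(n!)^γ ≤ n!`. For `n > N`
each term of the convolution is at most `C^(n-2) / ((k!)^γ ((n-k)!)^γ)`, and the neoclassical
inequality sums these to `C^(n-2) c 2^(γn) / (n!)^γ`. The remaining factor `c 2^(γn) / (2^(γn) - 2)`
decreases in `n`, so it is at most its value at `N + 1`, which is at most `C`; the choice
`N = ⌊1/γ⌋` is what makes `γ (N + 1) > 1`, i.e. `2^(γn) > 2`.
-/

open Finset Nat

lemma one_lt_mul_floor_one_div_add_one {γ : ℝ} (hγ : 0 < γ) : 1 < γ * (⌊1 / γ⌋₊ + 1 : ℝ) := by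
  have h := Nat.lt_floor_add_one (1 / γ)
  rw [div_lt_iff₀ hγ] at h
  linarith

lemma one_div_factorial_le_pow_div_factorial_rpow {γ C : ℝ} (hγ : γ ≤ 1) (hC : 1 ≤ C) (n : ℕ) :
    1 / (n ! : ℝ) ≤ C ^ (n - 1) / (n ! : ℝ) ^ γ :=
  div_le_div₀ (by positivity) (one_le_pow₀ hC) (by positivity)
    (Real.rpow_le_self_of_one_le (mod_cast n.factorial_pos) hγ)

lemma mul_div_sub_two_le_of_le {c x y : ℝ} (hc : 0 ≤ c) (hx : 2 < x) (hxy : x ≤ y) :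
    c * y / (y - 2) ≤ c * x / (x - 2) := by
  rw [div_le_div_iff₀ (by linarith) (by linarith)]
  nlinarith

lemma sum_Ico_mul_sub_le_pow_mul_sum_range {u b : ℕ → ℝ} {C : ℝ} {n : ℕ} (hC : 0 ≤ C)
    (hb : ∀ k, 0 < b k)
    (hu : ∀ k, 1 ≤ k → k < n → 0 ≤ u k ∧ u k ≤ C ^ (k - 1) / b k) :
    ∑ k ∈ Ico 1 n, u k * u (n - k) ≤ C ^ (n - 2) * ∑ k ∈ range (n + 1), 1 / (b k * b (n - k)) := by
  have hterm : ∀ k ∈ Ico 1 n, u k * u (n - k) ≤ C ^ (n - 2) * (1 / (b k * b (n - k))) := by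
    intro k hk
    obtain ⟨hk1, hkn⟩ := mem_Ico.mp hk
    obtain ⟨huk, hukC⟩ := hu k hk1 hkn
    obtain ⟨hunk, hunkC⟩ := hu (n - k) (by omega) (by omega)
    calc u k * u (n - k) ≤ C ^ (k - 1) / b k * (C ^ (n - k - 1) / b (n - k)) :=
          mul_le_mul hukC hunkC hunk (huk.trans hukC)
      _ = C ^ (k - 1 + (n - k - 1)) * (1 / (b k * b (n - k))) := by
          rw [pow_add]; field_simp
      _ = C ^ (n - 2) * (1 / (b k * b (n - k))) := by
          rw [show k - 1 + (n - k - 1) = n - 2 by omega]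
  calc ∑ k ∈ Ico 1 n, u k * u (n - k)
      ≤ C ^ (n - 2) * ∑ k ∈ Ico 1 n, 1 / (b k * b (n - k)) := by
        rw [mul_sum]; exact sum_le_sum hterm
    _ ≤ C ^ (n - 2) * ∑ k ∈ range (n + 1), 1 / (b k * b (n - k)) := by
        refine mul_le_mul_of_nonneg_left (sum_le_sum_of_subset_of_nonneg ?_ ?_) (by positivity)
        · intro k hk
          simp only [mem_Ico, mem_range] at hk ⊢
          omega
        · intro k _ _
          have := hb k; have := hb (n - k); positivity

lemma inv_sub_two_mul_le_pow_div {S c C B t : ℝ} {n : ℕ} (hn : 2 ≤ n) (ht : 2 < t) (hB : 0 < B)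
    (hC : 0 ≤ C) (hS : S ≤ C ^ (n - 2) * (c * t / B)) (hcC : c * t / (t - 2) ≤ C) :
    (t - 2)⁻¹ * S ≤ C ^ (n - 1) / B := by
  have ht2 : 0 < t - 2 := by linarith
  calc (t - 2)⁻¹ * S ≤ (t - 2)⁻¹ * (C ^ (n - 2) * (c * t / B)) := by gcongr
    _ = C ^ (n - 2) * (c * t / (t - 2)) / B := by field_simp
    _ ≤ C ^ (n - 2) * C / B := by gcongr
    _ = C ^ (n - 1) / B := by rw [← pow_succ, show n - 2 + 1 = n - 1 by omega]

/-- Factorial decay for the sequence `u(n)` of values of `q_γ` on words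
of length `n` in a shuffle Hopf algebra: assuming the neoclassical inequality with constant
`c_γ`, one has `u(n) ≤ C_γ^{n−1}/(n!)^γ` with
`C_γ = max(1, 2^{γ(N+1)} c_γ/(2^{γ(N+1)} − 2))`. -/
theorem stmt10 (γ : ℝ) (hγ0 : 0 < γ) (hγ1 : γ ≤ 1) (N : ℕ) (hN : N = ⌊1 / γ⌋₊)
    (cγ : ℝ) (hcγ : 0 < cγ)
    (hneo : ∀ n : ℕ, ∑ k ∈ Finset.range (n + 1),
        1 / (((k.factorial : ℝ)) ^ γ * (((n - k).factorial : ℝ)) ^ γ)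
      ≤ cγ * (2 : ℝ) ^ (γ * n) / ((n.factorial : ℝ)) ^ γ)
    (u : ℕ → ℝ)
    (hu1 : ∀ n : ℕ, 1 ≤ n → n ≤ N → u n = 1 / (n.factorial : ℝ))
    (hu2 : ∀ n : ℕ, N + 1 ≤ n →
      u n = ((2 : ℝ) ^ (γ * n) - 2)⁻¹ * ∑ k ∈ Finset.Ico 1 n, u k * u (n - k))
    (Cγ : ℝ)
    (hCγ : Cγ = max 1 ((2 : ℝ) ^ (γ * (N + 1)) * cγ / ((2 : ℝ) ^ (γ * (N + 1)) - 2))) :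
    ∀ n : ℕ, 1 ≤ n → u n ≤ Cγ ^ (n - 1) / ((n.factorial : ℝ)) ^ γ := by
  have hC1 : 1 ≤ Cγ := hCγ ▸ le_max_left _ _
  have hγN : 1 < γ * (N + 1) := hN ▸ one_lt_mul_floor_one_div_add_one hγ0
  have hN1 : 1 ≤ N := hN ▸ (Nat.one_le_floor_iff _).mpr (one_le_one_div hγ0 hγ1)
  have htwo : ∀ n : ℕ, N + 1 ≤ n → (2 : ℝ) ^ (γ * (N + 1)) ≤ 2 ^ (γ * n) := fun n hn =>
    Real.rpow_le_rpow_of_exponent_le one_le_two (by gcongr; exact_mod_cast hn)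
  have htwoN : (2 : ℝ) < 2 ^ (γ * (N + 1)) := by
    simpa using Real.rpow_lt_rpow_of_exponent_lt one_lt_two hγN
  suffices H : ∀ n, 1 ≤ n → 0 ≤ u n ∧ u n ≤ Cγ ^ (n - 1) / (n ! : ℝ) ^ γ from fun n hn => (H n hn).2
  refine fun n => Nat.strong_induction_on n fun n ih hn => ?_
  rcases le_or_gt n N with hnN | hNn
  · rw [hu1 n hn hnN]
    exact ⟨by positivity, one_div_factorial_le_pow_div_factorial_rpow hγ1 hC1 n⟩
  have ht : 2 < (2 : ℝ) ^ (γ * n) := htwoN.trans_le (htwo n hNn)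
  have hS : ∑ k ∈ Ico 1 n, u k * u (n - k) ≤ Cγ ^ (n - 2) * (cγ * 2 ^ (γ * n) / (n ! : ℝ) ^ γ) :=
    (sum_Ico_mul_sub_le_pow_mul_sum_range (by positivity) (fun k => by positivity)
      (fun k hk hkn => ih k hkn hk)).trans (mul_le_mul_of_nonneg_left (hneo n) (by positivity))
  have hcC : cγ * 2 ^ (γ * n) / (2 ^ (γ * n) - 2) ≤ Cγ :=
    (mul_div_sub_two_le_of_le hcγ.le htwoN (htwo n hNn)).trans
      (by rw [hCγ, mul_comm cγ]; exact le_max_right _ _)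
  rw [hu2 n hNn]
  have hS0 : 0 ≤ ∑ k ∈ Ico 1 n, u k * u (n - k) := sum_nonneg fun k hk => by
    obtain ⟨hk1, hkn⟩ := mem_Ico.mp hk
    exact mul_nonneg (ih k hkn hk1).1 (ih (n - k) (by omega) (by omega)).1
  exact ⟨mul_nonneg (inv_nonneg.mpr (by linarith)) hS0,
    inv_sub_two_mul_le_pow_div (by omega) ht (by positivity) (by positivity) hS hcC⟩
end

section
/- Let P be a finite poset with n elements and let s ≤ t be real numbers. Then the Lebesgue measure (on ℝ^P) of the set Ω^{st}_P := { x ∈ ℝ^P : s ≤ x_v ≤ t for all v ∈ P, and x_v ≥ x_w whenever v < w in P } equals e(P)·(t−s)^n/n!, where e(P) is the number of linear extensions of P. -/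
/-!
Off the null set of points with two equal coordinates, the cube `[s, t]^P` is partitioned by
the chambers in which a bijection `e : P ≃ Fin n` lists the coordinates in strictly decreasing
order. Permuting coordinates shows that all `n!` chambers have the same volume, namely
`(t - s)^n / n!`, and up to a null set `Ω^{st}_P` is the union of the chambers of the linear
extensions of `P`.
-/

open MeasureTheory Set
open scoped Nat ENNReal

namespace OrderSimplex

variable {ι : Type*} [Fintype ι]

def antiChamber (e : ι ≃ Fin (Fintype.card ι)) : Set (ι → ℝ) :=
  {x | StrictAnti (x ∘ e.symm)}

lemma measurableSet_antiChamber (e : ι ≃ Fin (Fintype.card ι)) :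
    MeasurableSet (antiChamber e) := by
  simp only [antiChamber, StrictAnti, Function.comp_apply, ofPred_forall]
  exact .iInter fun i => .iInter fun j => .iInter fun _ =>
    measurableSet_lt (measurable_pi_apply _) (measurable_pi_apply _)

lemma eq_of_mem_antiChamber {e e' : ι ≃ Fin (Fintype.card ι)} {x : ι → ℝ}
    (he : x ∈ antiChamber e) (he' : x ∈ antiChamber e') : e = e' := by
  have hmono : StrictMono (e' ∘ e.symm) := fun i j hij => by
    exact he'.lt_iff_gt.mp (by simpa using he hij)
  exact Equiv.ext fun v => by simpa using (congrFun hmono.eq_id (e v)).symm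

lemma pairwise_disjoint_antiChamber :
    Pairwise (Function.onFun Disjoint (antiChamber (ι := ι))) :=
  fun _ _ hne => disjoint_left.mpr fun _ he he' => hne (eq_of_mem_antiChamber he he')

lemma exists_mem_antiChamber {x : ι → ℝ} (hx : Function.Injective x) :
    ∃ e, x ∈ antiChamber e := by
  let y := x ∘ (Fintype.equivFin ι).symm
  let σ := Tuple.sort (OrderDual.toDual ∘ y)
  have hanti : Antitone (y ∘ σ) := Tuple.monotone_sort (OrderDual.toDual ∘ y)
  refine ⟨(Fintype.equivFin ι).trans σ.symm, ?_⟩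
  exact hanti.strictAnti_of_injective
    (hx.comp ((Fintype.equivFin ι).symm.injective.comp σ.injective))

lemma volume_setOf_eq_eq_zero {v w : ι} (hvw : v ≠ w) :
    volume {x : ι → ℝ | x v = x w} = 0 := by
  classical
  let L : (ι → ℝ) →ₗ[ℝ] ℝ := (LinearMap.proj v : (ι → ℝ) →ₗ[ℝ] ℝ) - LinearMap.proj w
  have hker : {x : ι → ℝ | x v = x w} = LinearMap.ker L := by
    ext x; simp [L, sub_eq_zero]
  rw [hker]
  refine Measure.addHaar_submodule _ _ fun htop => ?_
  have : Pi.single v (1 : ℝ) ∈ LinearMap.ker L := htop ▸ Submodule.mem_top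
  simp [L, Pi.single_eq_of_ne' hvw] at this

lemma volume_compl_iUnion_antiChamber :
    volume (⋃ e : ι ≃ Fin (Fintype.card ι), antiChamber e)ᶜ = 0 := by
  refine measure_mono_null (t := ⋃ (v) (w) (_ : v ≠ w), {x : ι → ℝ | x v = x w}) ?_ ?_
  · intro x hx
    by_contra hdiag
    simp only [mem_iUnion, not_exists] at hdiag
    obtain ⟨e, he⟩ := exists_mem_antiChamber fun v w hvw => by_contra fun h => hdiag v w h hvw
    exact hx (mem_iUnion.mpr ⟨e, he⟩)
  · exact measure_iUnion_null fun v => measure_iUnion_null fun w =>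
      measure_iUnion_null volume_setOf_eq_eq_zero

lemma antitone_iff_strictMono_of_mem_antiChamber [PartialOrder ι]
    {e : ι ≃ Fin (Fintype.card ι)} {x : ι → ℝ} (hx : x ∈ antiChamber e) :
    Antitone x ↔ StrictMono e := by
  rw [antitone_iff_forall_lt]
  refine forall₂_congr fun v w => imp_congr_right fun hvw => ?_
  have := hx.le_iff_ge (a := e w) (b := e v)
  simp only [Function.comp_apply, Equiv.symm_apply_apply] at this
  rw [this, le_iff_lt_or_eq, or_iff_left (e.injective.ne hvw.ne)]

def antiSimplex (K : Set ℝ) (n : ℕ) : Set (Fin n → ℝ) :=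
  univ.pi (fun _ => K) ∩ {y | StrictAnti y}

lemma volume_pi_inter_antiChamber (K : Set ℝ) (e : ι ≃ Fin (Fintype.card ι)) :
    volume (univ.pi (fun _ : ι => K) ∩ antiChamber e)
      = volume (antiSimplex K (Fintype.card ι)) := by
  rw [← (volume_measurePreserving_piCongrLeft (fun _ : ι => ℝ) e.symm).measure_preimage_equiv]
  congr 1
  ext x
  simp [antiSimplex, antiChamber, Function.comp_def, e.forall_congr_left,
    MeasurableEquiv.piCongrLeft_apply_apply]

lemma volume_pi_inter_biUnion_antiChamber {K : Set ℝ} (hK : MeasurableSet K)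
    (E : Finset (ι ≃ Fin (Fintype.card ι))) :
    volume (univ.pi (fun _ : ι => K) ∩ ⋃ e ∈ E, antiChamber e)
      = E.card * volume (antiSimplex K (Fintype.card ι)) := by
  rw [inter_iUnion₂, measure_biUnion_finset]
  · simp only [volume_pi_inter_antiChamber, Finset.sum_const, nsmul_eq_mul]
  · exact fun e _ e' _ hne =>
      (pairwise_disjoint_antiChamber hne).mono inter_subset_right inter_subset_right
  · exact fun e _ => (MeasurableSet.univ_pi fun _ => hK).inter (measurableSet_antiChamber e)

lemma factorial_mul_volume_antiSimplex {K : Set ℝ} (hK : MeasurableSet K) (n : ℕ) :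
    (n ! : ℝ≥0∞) * volume (antiSimplex K n) = volume K ^ n := by
  classical
  have h := volume_pi_inter_biUnion_antiChamber (ι := Fin n) hK Finset.univ
  simp only [Finset.mem_univ, iUnion_true, measure_inter_conull volume_compl_iUnion_antiChamber,
    volume_pi_pi, Finset.prod_const, Finset.card_univ] at h
  rw [Fintype.card_fin, Fintype.card_equiv (Equiv.refl _), Fintype.card_fin] at h
  exact h.symm

lemma volume_antiSimplex_Icc {s t : ℝ} (hst : s ≤ t) (n : ℕ) :
    volume (antiSimplex (Icc s t) n) = ENNReal.ofReal ((t - s) ^ n / n !) := by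
  have h := factorial_mul_volume_antiSimplex (measurableSet_Icc (a := s) (b := t)) n
  rw [Real.volume_Icc, ← ENNReal.ofReal_pow (sub_nonneg.mpr hst)] at h
  rw [ENNReal.ofReal_div_of_pos (by positivity), ENNReal.ofReal_natCast,
    ENNReal.eq_div_iff (by positivity) (ENNReal.natCast_ne_top _), h]

end OrderSimplex

open OrderSimplex in
/-- The Lebesgue volume of the order simplex
`Ω^{st}_P = { x : s ≤ x_v ≤ t, x_v ≥ x_w for v < w }` attached to a finite poset `P` with
`n` elements is `e(P)·(t−s)^n/n!`, where `e(P)` is the number of linear extensions of `P`. -/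
theorem stmt11 {P : Type*} [Fintype P] [PartialOrder P] (s t : ℝ) (hst : s ≤ t) :
    volume {x : P → ℝ | (∀ v : P, x v ∈ Set.Icc s t) ∧ ∀ v w : P, v < w → x w ≤ x v}
      = ENNReal.ofReal
          ((Nat.card {α : P ≃ Fin (Fintype.card P) // ∀ v w : P, v < w → α v < α w} : ℝ) *
            (t - s) ^ (Fintype.card P) / (Fintype.card P).factorial) := by
  classical
  let L : Finset (P ≃ Fin (Fintype.card P)) := {α | StrictMono α}
  have hΩ : {x : P → ℝ | (∀ v : P, x v ∈ Icc s t) ∧ Antitone x} ∩ ⋃ e, antiChamber e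
      = univ.pi (fun _ => Icc s t) ∩ ⋃ e ∈ L, antiChamber e := by
    ext x
    simp only [mem_inter_iff, mem_iUnion, mem_pi, mem_univ, true_implies, Finset.mem_filter,
      L, Finset.mem_univ, true_and, exists_prop, mem_ofPred_eq]
    constructor
    · rintro ⟨⟨hcube, hanti⟩, e, he⟩
      exact ⟨hcube, e, (antitone_iff_strictMono_of_mem_antiChamber he).1 hanti, he⟩
    · rintro ⟨hcube, e, hL, he⟩
      exact ⟨⟨hcube, (antitone_iff_strictMono_of_mem_antiChamber he).2 hL⟩, e, he⟩
  simp only [← antitone_iff_forall_lt]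
  rw [← measure_inter_conull volume_compl_iUnion_antiChamber, hΩ,
    volume_pi_inter_biUnion_antiChamber measurableSet_Icc, volume_antiSimplex_Icc hst,
    Nat.card_eq_fintype_card, Fintype.card_subtype, mul_div_assoc,
    ENNReal.ofReal_mul (Nat.cast_nonneg _), ENNReal.ofReal_natCast]
  rfl
end

section
/- Let P be a finite poset with n elements such that for every v ∈ P the set { u ∈ P : u < v } is totally ordered (i.e., P is a rooted forest poset with roots as minimal elements). Then e(P) · ∏_{v ∈ P} |{ w ∈ P : v ≤ w }| = n!, where e(P) is the number of linear extensions of P. Equivalently, for s ≤ t the Lebesgue measure of Ω^{st}_P := { x ∈ ℝ^P : s ≤ x_v ≤ t for all v, x_v ≥ x_w whenever v < w } equals (t−s)^n / ∏_{v ∈ P} |{ w : v ≤ w }|. -/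
/-!
Deleting a minimal element `r` matches the linear extensions of `P` that put `r` first with the
linear extensions of `P \ {r}`, and leaves the hook `|{w | v ≤ w}|` of every `v ≠ r` unchanged.
In a forest the up-sets of the minimal elements partition `P`, so their hooks add up to `n`, and
induction on `n` gives `e(P) · ∏ hooks = n!`.

For the volume, the cube `[s, t]^P` is covered by the `n!` congruent simplices
`{x | x ∘ α⁻¹ antitone}`, `α : P ≃ Fin n`, which meet only in the null set of non-injective
points. Sorting `x` decreasingly, with ties broken along a fixed linear extension, shows that `Ω`
is the union of the simplices of the linear extensions; hence `vol Ω = e(P) (t - s)^n / n!`.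
-/

open Finset MeasureTheory Function

def IsForestOrder (P : Type*) [Preorder P] : Prop :=
  ∀ v u w : P, u < v → w < v → u ≤ w ∨ w ≤ u

namespace Equiv

variable {P : Type*} {n : ℕ}

def restrictOfApplyEqZero [DecidableEq P] (r : P) :
    {α : P ≃ Fin (n + 1) // α r = 0} ≃ ({x // x ≠ r} ≃ Fin n) :=
  (subtypeEquiv ((optionSubtypeNe r).symm.equivCongr (Equiv.refl _)) (fun α => by simp)).trans <|
    (optionSubtype 0).trans ((Equiv.refl _).equivCongr (finSuccAboveEquiv 0).symm)

theorem succ_restrictOfApplyEqZero_apply [DecidableEq P] (r : P)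
    (α : {α : P ≃ Fin (n + 1) // α r = 0}) (v : {x // x ≠ r}) :
    (restrictOfApplyEqZero r α v).succ = α.1 v := by
  have h := (finSuccAboveEquiv (0 : Fin (n + 1))).apply_symm_apply
    ⟨α.1 v, fun h => v.2 (α.1.injective (h.trans α.2.symm))⟩
  simp only [finSuccAboveEquiv_apply, Subtype.mk.injEq, Fin.succAbove_zero] at h
  exact h

theorem strictMono_restrictOfApplyEqZero_iff [PartialOrder P] [DecidableEq P] {r : P}
    (hr : IsMin r) (α : {α : P ≃ Fin (n + 1) // α r = 0}) :
    StrictMono (restrictOfApplyEqZero r α) ↔ StrictMono α.1 := by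
  have hsucc := succ_restrictOfApplyEqZero_apply r α
  refine ⟨fun h v w hvw => ?_, fun h v w hvw => ?_⟩
  · have hw : w ≠ r := fun hw => hr.not_lt (hw ▸ hvw)
    by_cases hv : v = r
    · subst hv
      rw [α.2, Fin.pos_iff_ne_zero]
      exact fun h0 => hw (α.1.injective (h0.trans α.2.symm))
    · rw [← hsucc ⟨v, hv⟩, ← hsucc ⟨w, hw⟩, Fin.succ_lt_succ_iff]
      exact h hvw
  · rw [← Fin.succ_lt_succ_iff, hsucc, hsucc]
    exact h hvw

end Equiv

section LinearExtension

variable {P : Type*} [PartialOrder P] {n : ℕ}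

variable (P) in
theorem exists_strictMono_equiv_fin [Fintype P] :
    ∃ α : P ≃ Fin (Fintype.card P), StrictMono α := by
  let : Fintype (LinearExtension P) := ‹Fintype P›
  let e := (monoEquivOfFin (LinearExtension P) rfl).symm
  exact ⟨(Equiv.refl P).trans e.toEquiv,
    e.strictMono.comp (toLinearExtension.monotone.strictMono_of_injective fun _ _ h => h)⟩

theorem card_strictMono_equiv_apply_eq_zero {r : P} (hr : IsMin r) :
    Nat.card {α : P ≃ Fin (n + 1) // α r = 0 ∧ StrictMono α} =
      Nat.card {α : {x // x ≠ r} ≃ Fin n // StrictMono α} := by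
  classical
  exact Nat.card_congr <| (Equiv.subtypeSubtypeEquivSubtypeInter _ _).symm.trans <|
    Equiv.subtypeEquiv (Equiv.restrictOfApplyEqZero r)
      fun α => (Equiv.strictMono_restrictOfApplyEqZero_iff hr α).symm

open scoped Classical in
theorem card_strictMono_equiv_succ [Fintype P] :
    Nat.card {α : P ≃ Fin (n + 1) // StrictMono α} =
      ∑ r ∈ univ.filter (IsMin : P → Prop),
        Nat.card {α : {x // x ≠ r} ≃ Fin n // StrictMono α} := by
  have hfiber (r : P) : {α : {α : P ≃ Fin (n + 1) // StrictMono α} // α.1.symm 0 = r} ≃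
      {α : P ≃ Fin (n + 1) // α r = 0 ∧ StrictMono α} :=
    (Equiv.subtypeSubtypeEquivSubtypeInter (fun α : P ≃ Fin (n + 1) => StrictMono α)
      (fun α => α.symm 0 = r)).trans <|
      Equiv.subtypeEquivRight fun α => by rw [Equiv.symm_apply_eq, eq_comm, and_comm]
  have hmin (r : P) (hr : Nat.card {α : P ≃ Fin (n + 1) // α r = 0 ∧ StrictMono α} ≠ 0) :
      IsMin r := by
    obtain ⟨α, hα0, hα⟩ := (Nat.card_ne_zero.1 hr).1.some
    exact fun u hu => hu.lt_or_eq.elim (fun h => absurd (hα h) (by simp [hα0])) (·.ge)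
  rw [Nat.card_congr (Equiv.sigmaFiberEquiv fun α : {α : P ≃ Fin (n + 1) // StrictMono α} =>
    α.1.symm 0).symm, Nat.card_sigma]
  simp_rw [Nat.card_congr (hfiber _)]
  rw [← Finset.sum_filter_of_ne fun r _ h => hmin r h]
  exact Finset.sum_congr rfl fun r hr => card_strictMono_equiv_apply_eq_zero (mem_filter.1 hr).2

theorem card_subtype_ne_le_eq {r : P} (hr : IsMin r) (v : {x // x ≠ r}) :
    Nat.card {w : {x // x ≠ r} // v ≤ w} = Nat.card {w : P // (v : P) ≤ w} :=
  Nat.card_congr <| Equiv.subtypeSubtypeEquivSubtype (p := (· ≠ r)) (q := ((v : P) ≤ ·))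
    fun hw hwr => v.2 (le_antisymm (hwr ▸ hw) (hr (hwr ▸ hw)))

theorem prod_card_le_eq_mul_prod_subtype_ne [Fintype P] [DecidableEq P] {r : P} (hr : IsMin r) :
    ∏ v : P, Nat.card {w // v ≤ w} =
      Nat.card {w // r ≤ w} * ∏ v : {x // x ≠ r}, Nat.card {w : {x // x ≠ r} // v ≤ w} := by
  simp_rw [Fintype.prod_eq_mul_prod_subtype_ne _ r, card_subtype_ne_le_eq hr]

end LinearExtension

namespace IsForestOrder

variable {P : Type*} [PartialOrder P]

theorem subtype (hP : IsForestOrder P) (p : P → Prop) : IsForestOrder (Subtype p) :=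
  fun v u w huv hwv => hP v u w huv hwv

theorem eq_of_isMin_of_le (hP : IsForestOrder P) {r r' w : P} (hr : IsMin r) (hr' : IsMin r')
    (hrw : r ≤ w) (hr'w : r' ≤ w) : r = r' := by
  have : r ≤ r' ∨ r' ≤ r := by
    rcases hrw.lt_or_eq with hrw | rfl
    · rcases hr'w.lt_or_eq with hr'w | rfl
      · exact hP w r r' hrw hr'w
      · exact .inl hrw.le
    · exact .inr hr'w
  rcases this with h | h
  · exact le_antisymm h (hr' h)
  · exact le_antisymm (hr h) h

open scoped Classical in
theorem sum_card_le_isMin_eq_card [Fintype P] (hP : IsForestOrder P) :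
    ∑ r ∈ univ.filter (IsMin : P → Prop), Nat.card {w // r ≤ w} = Fintype.card P := by
  have hcover : (univ.filter IsMin).biUnion (fun r : P => univ.filter (r ≤ ·)) = univ := by
    refine eq_univ_of_forall fun w => ?_
    obtain ⟨r, hrw, hr⟩ := exists_minimal_le_of_wellFoundedLT (fun _ => True) w trivial
    exact mem_biUnion.2
      ⟨r, mem_filter.2 ⟨mem_univ _, minimal_true.1 hr⟩, mem_filter.2 ⟨mem_univ _, hrw⟩⟩
  calc ∑ r ∈ univ.filter (IsMin : P → Prop), Nat.card {w // r ≤ w}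
      = #((univ.filter IsMin).biUnion fun r : P => univ.filter (r ≤ ·)) := by
        rw [card_biUnion]
        · simp only [Nat.card_eq_fintype_card, Fintype.card_subtype]
        · intro r hr r' hr' hne
          refine disjoint_filter.2 fun w _ hrw hr'w => hne ?_
          exact hP.eq_of_isMin_of_le (mem_filter.1 hr).2 (mem_filter.1 hr').2 hrw hr'w
    _ = Fintype.card P := by rw [hcover, card_univ]

theorem card_strictMono_equiv_mul_prod_card_le {P : Type*} [PartialOrder P] [Fintype P]
    (hP : IsForestOrder P) {n : ℕ} (hn : Fintype.card P = n) :
    Nat.card {α : P ≃ Fin n // StrictMono α} * ∏ v : P, Nat.card {w // v ≤ w} = n.factorial := by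
  classical
  induction n generalizing P with
  | zero =>
    have := Fintype.card_eq_zero_iff.1 hn
    rw [Nat.card_eq_one_iff_unique.2 ⟨inferInstance, ⟨⟨Equiv.equivOfIsEmpty _ _, isEmptyElim⟩⟩⟩]
    simp
  | succ n ih =>
    have hcard (r : P) : Fintype.card {x // x ≠ r} = n := by
      simp [Fintype.card_subtype_compl, hn]
    calc Nat.card {α : P ≃ Fin (n + 1) // StrictMono α} * ∏ v : P, Nat.card {w // v ≤ w}
        = ∑ r ∈ univ.filter IsMin, Nat.card {w // r ≤ w} *
            (Nat.card {α : {x // x ≠ r} ≃ Fin n // StrictMono α} *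
              ∏ v : {x // x ≠ r}, Nat.card {w : {x // x ≠ r} // v ≤ w}) := by
          rw [card_strictMono_equiv_succ, sum_mul]
          refine sum_congr rfl fun r hr => ?_
          rw [prod_card_le_eq_mul_prod_subtype_ne (mem_filter.1 hr).2]
          ring
      _ = ∑ r ∈ univ.filter IsMin, Nat.card {w // r ≤ w} * n.factorial :=
          sum_congr rfl fun r _ => by rw [ih (hP.subtype _) (hcard r)]
      _ = (n + 1).factorial := by rw [← sum_mul, hP.sum_card_le_isMin_eq_card, hn, Nat.factorial_succ]

end IsForestOrder

theorem exists_antitone_comp_symm {P γ : Type*} [LinearOrder γ] {n : ℕ} (x : P → γ)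
    (β : P ≃ Fin n) :
    ∃ α : P ≃ Fin n, Antitone (x ∘ α.symm) ∧ ∀ a b, β a < β b → x b ≤ x a → α a < α b := by
  set f : Fin n → γᵒᵈ := OrderDual.toDual ∘ x ∘ β.symm
  set σ := Tuple.sort f
  -- `Tuple.sort` is stable, so ties in `x` are broken along `β`.
  obtain ⟨hmono, hstable⟩ := Tuple.eq_sort_iff.1 (rfl : σ = Tuple.sort f)
  set α := β.trans σ.symm
  have hσ (v : P) : σ (α v) = β v := σ.apply_symm_apply _
  have hf (v : P) : f (σ (α v)) = OrderDual.toDual (x v) := by simp [f, hσ]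
  refine ⟨α, monotone_toDual_comp_iff.1 hmono, fun a b hab hxab => ?_⟩
  by_contra! hba
  have hlt : α b < α a := hba.lt_of_ne fun h => hab.ne (by rw [α.injective h])
  have hx : x a = x b := le_antisymm (by simpa [hf] using hmono hlt.le) hxab
  have hβ := hstable _ _ hlt (by rw [hf, hf, hx])
  rw [hσ, hσ] at hβ
  exact lt_asymm hab hβ

theorem volume_setOf_not_injective {ι : Type*} [Fintype ι] :
    volume {x : ι → ℝ | ¬Injective x} = 0 := by
  classical
  have hplane (a b : ι) (hab : a ≠ b) : volume {x : ι → ℝ | x a = x b} = 0 := by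
    let L : (ι → ℝ) →ₗ[ℝ] ℝ := LinearMap.proj (R := ℝ) (φ := fun _ : ι => ℝ) a - LinearMap.proj b
    have hker : {x : ι → ℝ | x a = x b} = LinearMap.ker L := by
      ext x; simp [L, sub_eq_zero]
    rw [hker]
    refine Measure.addHaar_submodule _ _ fun htop => ?_
    have : Pi.single a 1 ∈ LinearMap.ker L := htop ▸ Submodule.mem_top
    simp [L, Pi.single_eq_of_ne' hab] at this
  refine measure_mono_null (fun x hx => ?_) <|
    measure_iUnion_null fun p : {p : ι × ι // p.1 ≠ p.2} => hplane p.1.1 p.1.2 p.2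
  obtain ⟨a, b, hxab, hab⟩ := Function.not_injective_iff.1 hx
  exact Set.mem_iUnion.2 ⟨⟨(a, b), hab⟩, hxab⟩

section OrderSimplex

variable {P : Type*} {n : ℕ}

def orderSimplex (s t : ℝ) (α : P ≃ Fin n) : Set (P → ℝ) :=
  {x | (∀ v, x v ∈ Set.Icc s t) ∧ Antitone (x ∘ α.symm)}

variable {s t : ℝ}

theorem isClosed_orderSimplex (α : P ≃ Fin n) : IsClosed (orderSimplex s t α) := by
  refine IsClosed.inter (s₁ := {x : P → ℝ | ∀ v, x v ∈ Set.Icc s t}) ?_ (isClosed_antitone.preimage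
    (continuous_pi fun i => continuous_apply (α.symm i) : Continuous fun x : P → ℝ => x ∘ α.symm))
  rw [Set.ofPred_forall]
  exact isClosed_iInter fun v => isClosed_Icc.preimage (continuous_apply v)

theorem orderSimplex_inter_subset {α β : P ≃ Fin n} (hαβ : α ≠ β) :
    orderSimplex s t α ∩ orderSimplex s t β ⊆ {x | ¬Injective x} := by
  rintro x ⟨⟨-, hα⟩, -, hβ⟩ hx
  have h := Tuple.unique_antitone (f := x ∘ α.symm) (σ := Equiv.refl _) (τ := β.symm.trans α)
    hα (by simpa [Function.comp_def] using hβ)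
  refine hαβ (Equiv.symm_bijective.injective (Equiv.ext fun i => ?_))
  simpa using hx (congrFun h i)

theorem volume_orderSimplex [Fintype P] (α : P ≃ Fin n) :
    volume (orderSimplex s t α) = volume (orderSimplex s t (Equiv.refl (Fin n))) := by
  rw [← (volume_measurePreserving_piCongrLeft (fun _ => ℝ) α.symm).measure_preimage_equiv]
  congr 1
  ext x
  have hx : (Equiv.piCongrLeft (fun _ => ℝ) α.symm) x ∘ α.symm = x :=
    funext fun i => by simp [Equiv.piCongrLeft_apply_eq_cast]
  simp only [orderSimplex, Set.mem_preimage, Set.mem_ofPred_eq, MeasurableEquiv.coe_piCongrLeft, hx]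
  simp only [Equiv.piCongrLeft_apply_eq_cast, Equiv.symm_symm, cast_eq, Set.mem_Icc,
    Equiv.refl_symm, Equiv.coe_refl, CompTriple.comp_eq, and_congr_left_iff]
  exact fun _ => α.forall_congr_right (q := fun i => s ≤ x i ∧ x i ≤ t)

theorem volume_biUnion_orderSimplex [Fintype P] (E : Finset (P ≃ Fin n)) :
    volume (⋃ α ∈ E, orderSimplex s t α) =
      E.card * volume (orderSimplex s t (Equiv.refl (Fin n))) := by
  rw [measure_biUnion_finset₀ (fun α _ β _ hαβ => measure_mono_null
      (orderSimplex_inter_subset hαβ) volume_setOf_not_injective)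
    fun α _ => (isClosed_orderSimplex α).measurableSet.nullMeasurableSet]
  simp [volume_orderSimplex]

theorem volume_setOf_forall_mem_Icc [Fintype P] (hst : s ≤ t) :
    volume {x : P → ℝ | ∀ v, x v ∈ Set.Icc s t} = ENNReal.ofReal ((t - s) ^ Fintype.card P) := by
  have : {x : P → ℝ | ∀ v, x v ∈ Set.Icc s t} = Set.Icc (fun _ => s) (fun _ => t) := by
    ext x; simp [Pi.le_def, forall_and]
  rw [this, Real.volume_Icc_pi, ENNReal.ofReal_pow (sub_nonneg.2 hst)]
  simp

theorem factorial_mul_volume_orderSimplex (hst : s ≤ t) :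
    n.factorial * volume (orderSimplex s t (Equiv.refl (Fin n))) =
      ENNReal.ofReal ((t - s) ^ n) := by
  have hcover : ⋃ α ∈ (Finset.univ : Finset (Fin n ≃ Fin n)), orderSimplex s t α =
      {x | ∀ i, x i ∈ Set.Icc s t} := by
    refine subset_antisymm (Set.iUnion₂_subset fun α _ x hx => hx.1) fun x hx => ?_
    obtain ⟨α, hα, -⟩ := exists_antitone_comp_symm x (Equiv.refl _)
    exact Set.mem_biUnion (Finset.mem_univ α) ⟨hx, hα⟩
  calc n.factorial * volume (orderSimplex s t (Equiv.refl (Fin n)))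
      = volume (⋃ α ∈ (Finset.univ : Finset (Fin n ≃ Fin n)), orderSimplex s t α) := by
        rw [volume_biUnion_orderSimplex, Finset.card_univ, Fintype.card_equiv (Equiv.refl _),
          Fintype.card_fin]
    _ = ENNReal.ofReal ((t - s) ^ n) := by
        rw [hcover, volume_setOf_forall_mem_Icc hst, Fintype.card_fin]

theorem volume_setOf_antitone [PartialOrder P] [Fintype P] :
    volume {x : P → ℝ | (∀ v, x v ∈ Set.Icc s t) ∧ Antitone x} =
      Nat.card {α : P ≃ Fin (Fintype.card P) // StrictMono α} *
        volume (orderSimplex s t (Equiv.refl (Fin (Fintype.card P)))) := by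
  classical
  obtain ⟨β, hβ⟩ := exists_strictMono_equiv_fin P
  have hunion : {x : P → ℝ | (∀ v, x v ∈ Set.Icc s t) ∧ Antitone x} =
      ⋃ α ∈ Finset.univ.filter fun α : P ≃ Fin (Fintype.card P) => StrictMono α,
        orderSimplex s t α := by
    ext x
    simp only [Set.mem_iUnion, Finset.mem_filter, Finset.mem_univ, true_and, exists_prop]
    refine ⟨fun ⟨hbox, hx⟩ => ?_, fun ⟨α, hα, hbox, hx⟩ => ⟨hbox, fun v w hvw => ?_⟩⟩
    · obtain ⟨α, hαx, hα⟩ := exists_antitone_comp_symm x β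
      exact ⟨α, fun v w hvw => hα v w (hβ hvw) (hx hvw.le), hbox, hαx⟩
    · simpa using hx (hα.monotone hvw)
  rw [hunion, volume_biUnion_orderSimplex, Nat.card_eq_fintype_card, Fintype.card_subtype]

end OrderSimplex

/-- For a finite forest poset `P` (the strict lower set of every element is
totally ordered), the number of linear extensions satisfies
`e(P) · ∏_v |{w : v ≤ w}| = n!`; equivalently the order simplex has volume
`(t−s)^n / ∏_v |{w : v ≤ w}|`. -/
theorem stmt12 {P : Type*} [Fintype P] [PartialOrder P]
    (hforest : ∀ v u w : P, u < v → w < v → u ≤ w ∨ w ≤ u) :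
    (Nat.card {α : P ≃ Fin (Fintype.card P) // ∀ v w : P, v < w → α v < α w}) *
        (∏ v : P, Nat.card {w : P // v ≤ w}) = (Fintype.card P).factorial ∧
      ∀ s t : ℝ, s ≤ t →
        volume {x : P → ℝ | (∀ v : P, x v ∈ Set.Icc s t) ∧ ∀ v w : P, v < w → x w ≤ x v}
          = ENNReal.ofReal
              ((t - s) ^ (Fintype.card P) / ∏ v : P, (Nat.card {w : P // v ≤ w} : ℝ)) := by
  have hcount := IsForestOrder.card_strictMono_equiv_mul_prod_card_le hforest rfl
  refine ⟨hcount, fun s t hst => ?_⟩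
  have hhooks : 0 < ∏ v : P, Nat.card {w : P // v ≤ w} :=
    Finset.prod_pos fun v _ => Nat.card_pos_iff.2 ⟨⟨⟨v, le_rfl⟩⟩, inferInstance⟩
  simp_rw [← antitone_iff_forall_lt]
  rw [volume_setOf_antitone, ← Nat.cast_prod, ENNReal.ofReal_div_of_pos (by exact_mod_cast hhooks),
    ENNReal.ofReal_natCast, ENNReal.eq_div_iff (by positivity) (ENNReal.natCast_ne_top _),
    ← factorial_mul_volume_orderSimplex hst, ← hcount]
  push_cast
  ring
end

section
/- Let P be a finite poset with n elements and define the poset factorial Q! := |Q|!/e(Q) for any finite poset Q, where e(Q) is its number of linear extensions. Then for all real numbers h, k ≥ 0: (h + k)^n / P! = Σ_D h^{n−|D|} k^{|D|} / ((P∖D)! · D!), where the sum runs over all down-sets D of P (subsets D with w ∈ D and v < w implying v ∈ D), and P∖D and D carry the induced partial orders. -/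
open scoped Classical

/-- The factorial of a finite poset: `Q! = |Q|!/e(Q)`, where `e(Q)` is the number of linear
extensions of `Q`. -/
noncomputable def posetFactorial (Q : Type*) [Fintype Q] [PartialOrder Q] : ℝ :=
  ((Fintype.card Q).factorial : ℝ) /
    (Nat.card {α : Q ≃ Fin (Fintype.card Q) // ∀ v w : Q, v < w → α v < α w} : ℝ)

/-
Cutting a linear extension `α` of `P` at height `m` splits `P` into the down-set
`D = α⁻¹ {0, …, m - 1}` of size `m` and its complement, and `α` is the concatenation of its
restrictions to `D` and to `P ∖ D`. Conversely any two linear extensions of a down-set and of its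
complement concatenate to one of `P`. Hence `e(P) = ∑_{|D| = m} e(D) e(P ∖ D)` for every `m ≤ n`,
and dividing by `n! = C(n, m) m! (n - m)!` turns the binomial expansion of `(h + k)^n / P!` into
the sum over down-sets.
-/

open Finset

/-- Linear extensions of `Q` onto `Fin r`; the target size `r` is kept free so that extensions of
a down-set of size `m` live in `LinExt _ m` without transporting along `card = m`. -/
def LinExt (Q : Type*) [PartialOrder Q] (r : ℕ) : Type _ :=
  {α : Q ≃ Fin r // ∀ v w : Q, v < w → α v < α w}

abbrev IsDownSet {P : Type*} [LT P] (D : Finset P) : Prop :=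
  ∀ v w : P, w ∈ D → v < w → v ∈ D

namespace LinExt

variable {Q : Type*} [PartialOrder Q]

noncomputable instance [Fintype Q] (r : ℕ) : Fintype (LinExt Q r) := by
  unfold LinExt; infer_instance

@[ext]
theorem ext {r : ℕ} {α β : LinExt Q r} (h : ∀ v, (α.1 v : ℕ) = β.1 v) : α = β :=
  Subtype.ext <| Equiv.ext fun v => Fin.ext (h v)

instance [Fintype Q] : Nonempty (LinExt Q (Fintype.card Q)) := by
  let _ : Fintype (LinearExtension Q) := ‹Fintype Q›
  let e : LinearExtension Q ≃o Fin (Fintype.card Q) := (monoEquivOfFin _ rfl).symm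
  exact ⟨⟨e.toEquiv, fun v w hvw => e.strictMono <|
    toLinearExtension.monotone.strictMono_of_injective (fun _ _ => id) hvw⟩⟩

end LinExt

theorem posetFactorial_eq_div (Q : Type*) [Fintype Q] [PartialOrder Q] {r : ℕ}
    (hr : Fintype.card Q = r) :
    posetFactorial Q = (r.factorial : ℝ) / Fintype.card (LinExt Q r) := by
  subst hr
  rw [posetFactorial, Nat.card_eq_fintype_card]
  rfl

theorem card_linExt_ne_zero (Q : Type*) [Fintype Q] [PartialOrder Q] {r : ℕ}
    (hr : Fintype.card Q = r) : Fintype.card (LinExt Q r) ≠ 0 := by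
  subst hr
  exact Fintype.card_ne_zero

def finAddGeEquiv (m r : ℕ) : {i : Fin (m + r) // m ≤ (i : ℕ)} ≃ Fin r where
  toFun i := ⟨i.1 - m, by omega⟩
  invFun j := ⟨Fin.natAdd m j, by simp⟩
  left_inv i := by ext; simp; omega
  right_inv j := by ext; simp

section appendEquiv

variable {P : Type*} {D : Finset P} {m r : ℕ}

noncomputable def appendEquiv (β : {v // v ∈ D} ≃ Fin m) (γ : {v // v ∉ D} ≃ Fin r) :
    P ≃ Fin (m + r) :=
  (Equiv.sumCompl (· ∈ D)).symm.trans ((β.sumCongr γ).trans finSumFinEquiv)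

theorem appendEquiv_apply_of_mem (β : {v // v ∈ D} ≃ Fin m) (γ : {v // v ∉ D} ≃ Fin r)
    {v : P} (hv : v ∈ D) : (appendEquiv β γ v : ℕ) = β ⟨v, hv⟩ := by
  simp [appendEquiv, Equiv.sumCompl_symm_apply_of_pos hv]

theorem appendEquiv_apply_of_not_mem (β : {v // v ∈ D} ≃ Fin m) (γ : {v // v ∉ D} ≃ Fin r)
    {v : P} (hv : v ∉ D) : (appendEquiv β γ v : ℕ) = m + γ ⟨v, hv⟩ := by
  simp [appendEquiv, Equiv.sumCompl_symm_apply_of_neg hv]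

end appendEquiv

namespace LinExt

variable {P : Type*} [PartialOrder P] {m r : ℕ}

def lowerPart [Fintype P] (m : ℕ) {n : ℕ} (α : LinExt P n) : Finset P :=
  univ.filter fun v => (α.1 v : ℕ) < m

variable [Fintype P]

theorem mem_lowerPart {n : ℕ} {α : LinExt P n} {v : P} :
    v ∈ α.lowerPart m ↔ (α.1 v : ℕ) < m := by
  simp [lowerPart]

theorem isDownSet_lowerPart {n : ℕ} (α : LinExt P n) : IsDownSet (α.lowerPart m) := by
  simp only [IsDownSet, mem_lowerPart]
  exact fun v w hw hvw => (Fin.lt_def.1 (α.2 v w hvw)).trans hw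

theorem card_lowerPart (α : LinExt P (m + r)) : (α.lowerPart m).card = m := by
  rw [← Fintype.card_coe]
  exact (Fintype.card_congr ((α.1.subtypeEquiv fun _ => mem_lowerPart).trans
    (Fin.castLEquiv (Nat.le_add_right m r)).symm)).trans (Fintype.card_fin m)

variable {D : Finset P}

theorem mem_iff_of_lowerPart_eq {n : ℕ} {α : LinExt P n} (hα : α.lowerPart m = D) (v : P) :
    v ∈ D ↔ (α.1 v : ℕ) < m := by
  rw [← hα, mem_lowerPart]

noncomputable def append (hD : IsDownSet D)
    (β : LinExt {v // v ∈ D} m) (γ : LinExt {v // v ∉ D} r) : LinExt P (m + r) :=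
  ⟨appendEquiv β.1 γ.1, by
    intro v w hvw
    rw [Fin.lt_def]
    by_cases hw : w ∈ D
    · have hv := hD v w hw hvw
      rw [appendEquiv_apply_of_mem _ _ hv, appendEquiv_apply_of_mem _ _ hw]
      exact β.2 ⟨v, hv⟩ ⟨w, hw⟩ hvw
    by_cases hv : v ∈ D
    · rw [appendEquiv_apply_of_mem _ _ hv, appendEquiv_apply_of_not_mem _ _ hw]
      omega
    · rw [appendEquiv_apply_of_not_mem _ _ hv, appendEquiv_apply_of_not_mem _ _ hw]
      exact Nat.add_lt_add_left (γ.2 ⟨v, hv⟩ ⟨w, hw⟩ hvw) m⟩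

def restrictLower (α : LinExt P (m + r)) (hα : α.lowerPart m = D) : LinExt {v // v ∈ D} m :=
  ⟨(α.1.subtypeEquiv (mem_iff_of_lowerPart_eq hα)).trans
      (Fin.castLEquiv (Nat.le_add_right m r)).symm,
    fun _ _ hvw => α.2 _ _ hvw⟩

def restrictUpper (α : LinExt P (m + r)) (hα : α.lowerPart m = D) : LinExt {v // v ∉ D} r :=
  ⟨(α.1.subtypeEquiv fun v => (mem_iff_of_lowerPart_eq hα v).not.trans not_lt).trans
      (finAddGeEquiv m r),
    fun v w hvw => by
      have hvw' := Fin.lt_def.1 (α.2 _ _ hvw)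
      show (α.1 v : ℕ) - m < (α.1 w : ℕ) - m
      have hv : m ≤ (α.1 v : ℕ) := not_lt.1 fun h => v.2 ((mem_iff_of_lowerPart_eq hα v).2 h)
      omega⟩

theorem append_restrict (hD : IsDownSet D) (α : LinExt P (m + r))
    (hα : α.lowerPart m = D) : append hD (α.restrictLower hα) (α.restrictUpper hα) = α := by
  ext v
  by_cases hv : v ∈ D
  · simp [append, appendEquiv_apply_of_mem _ _ hv, restrictLower]
  · have : m ≤ (α.1 v : ℕ) := not_lt.1 fun h => hv ((mem_iff_of_lowerPart_eq hα v).2 h)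
    simp [append, appendEquiv_apply_of_not_mem _ _ hv, restrictUpper, finAddGeEquiv]
    omega

theorem lowerPart_append (hD : IsDownSet D)
    (β : LinExt {v // v ∈ D} m) (γ : LinExt {v // v ∉ D} r) :
    (append hD β γ).lowerPart m = D := by
  ext v
  rw [mem_lowerPart]
  by_cases hv : v ∈ D
  · simp only [append, appendEquiv_apply_of_mem _ _ hv, hv, Fin.is_lt]
  · simp [append, appendEquiv_apply_of_not_mem _ _ hv, hv]

theorem restrictLower_append (hD : IsDownSet D)
    (β : LinExt {v // v ∈ D} m) (γ : LinExt {v // v ∉ D} r)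
    (h : (append hD β γ).lowerPart m = D) :
    (append hD β γ).restrictLower h = β := by
  ext v
  simp [restrictLower, append, appendEquiv_apply_of_mem _ _ v.2]

theorem restrictUpper_append (hD : IsDownSet D)
    (β : LinExt {v // v ∈ D} m) (γ : LinExt {v // v ∉ D} r)
    (h : (append hD β γ).lowerPart m = D) :
    (append hD β γ).restrictUpper h = γ := by
  ext v
  simp [restrictUpper, append, appendEquiv_apply_of_not_mem _ _ v.2, finAddGeEquiv]

noncomputable def fiberEquiv (hD : IsDownSet D) :
    {α : LinExt P (m + r) // α.lowerPart m = D} ≃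
      LinExt {v // v ∈ D} m × LinExt {v // v ∉ D} r where
  toFun α := (α.1.restrictLower α.2, α.1.restrictUpper α.2)
  invFun βγ := ⟨append hD βγ.1 βγ.2, lowerPart_append hD βγ.1 βγ.2⟩
  left_inv α := Subtype.ext (append_restrict hD α.1 α.2)
  right_inv _ := Prod.ext (restrictLower_append hD _ _ (lowerPart_append hD _ _))
    (restrictUpper_append hD _ _ (lowerPart_append hD _ _))

theorem card_eq_sum_downSet (m r : ℕ) :
    Fintype.card (LinExt P (m + r)) =
      ∑ D ∈ univ.filter fun D : Finset P => IsDownSet D ∧ D.card = m,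
        Fintype.card (LinExt {v // v ∈ D} m) * Fintype.card (LinExt {v // v ∉ D} r) := by
  rw [← Finset.card_univ]
  refine (card_eq_sum_card_fiberwise (f := lowerPart m) fun α _ => ?_).trans
    (sum_congr rfl fun D hD => ?_)
  · exact mem_filter.2 ⟨mem_univ _, α.isDownSet_lowerPart, α.card_lowerPart⟩
  · rw [← Fintype.card_prod, ← Fintype.card_congr (fiberEquiv (mem_filter.1 hD).2.1),
      Fintype.card_subtype]

end LinExt

theorem stmt13_general {P : Type*} [Fintype P] [PartialOrder P] (h k : ℝ) :
    (h + k) ^ (Fintype.card P) / posetFactorial P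
      = ∑ D ∈ Finset.univ.filter
          (fun D : Finset P => ∀ v w : P, w ∈ D → v < w → v ∈ D),
          h ^ (Fintype.card P - D.card) * k ^ D.card /
            (posetFactorial {v : P // v ∉ D} * posetFactorial {v : P // v ∈ D}) := by
  set n := Fintype.card P with hn
  rw [posetFactorial_eq_div P hn.symm, div_div_eq_mul_div, add_comm h k, add_pow, sum_mul,
    sum_div, ← sum_fiberwise_of_maps_to (g := card) (t := range (n + 1))
      fun D _ => mem_range_succ_iff.2 (card_le_univ D)]
  refine sum_congr rfl fun m hm => ?_
  have hmn : m ≤ n := mem_range_succ_iff.1 hm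
  have hsplit := LinExt.card_eq_sum_downSet (P := P) m (n - m)
  rw [Nat.add_sub_cancel' hmn] at hsplit
  rw [filter_filter, hsplit, Nat.cast_sum, mul_sum, sum_div]
  refine sum_congr rfl fun D hD => ?_
  obtain ⟨-, -, rfl⟩ := mem_filter.1 hD
  have hcompl : Fintype.card {v // v ∉ D} = n - #D := by
    rw [Fintype.card_subtype_compl, Fintype.card_coe]
  have hext_mem := card_linExt_ne_zero _ (Fintype.card_coe D)
  have hext_not_mem := card_linExt_ne_zero _ hcompl
  rw [posetFactorial_eq_div _ hcompl, posetFactorial_eq_div _ (Fintype.card_coe D),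
    Nat.cast_choose ℝ hmn, Nat.cast_mul]
  field_simp

/-- Binomial formula for poset factorials: for `h, k ≥ 0`,
`(h+k)^n / P! = Σ_D h^{n−|D|} k^{|D|} / ((P∖D)!·D!)`, the sum running over all down-sets
`D` of `P`. -/
theorem stmt13 {P : Type*} [Fintype P] [PartialOrder P] (h k : ℝ)
    (hh : 0 ≤ h) (hk : 0 ≤ k) :
    (h + k) ^ (Fintype.card P) / posetFactorial P
      = ∑ D ∈ Finset.univ.filter
          (fun D : Finset P => ∀ v w : P, w ∈ D → v < w → v ∈ D),
          h ^ (Fintype.card P - D.card) * k ^ D.card /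
            (posetFactorial {v : P // v ∉ D} * posetFactorial {v : P // v ∈ D}) :=
  stmt13_general h k
end

section
/- Let U and V be compact subsets of ℂ^n, and let r > 0 be such that for every y ∈ V the closed polydisc { z ∈ ℂ^n : |z_α − y_α| ≤ r for all α } is contained in U. Let f₁, …, f_k be first-order differential operators f_j = Σ_{α=1}^n f_j^α ∂_α whose coefficients f_j^α are holomorphic on an open set containing U, and set M := max_{j,α} sup_{z ∈ U} |f_j^α(z)|. Then for every function φ holomorphic on an open set containing U, sup_{y ∈ V} |(f₁ ∘ f₂ ∘ ⋯ ∘ f_k φ)(y)| ≤ (nM/r)^k · k^k · sup_{z ∈ U} |φ(z)|. -/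
/-!
Cauchy's estimate on a closed ball of radius `ρ` for the sup norm of `ℂⁿ`, i.e. a polydisc,
bounds the derivative of a holomorphic function by `sup |F| / ρ`, so a single first-order
operator with coefficients bounded by `M` costs a factor `n M / ρ`. For `y ∈ V` the polydiscs
of radii `j r / k` around `y` lie in `U`; applying the estimate `k` times with `ρ = r / k`, going
outwards one step per operator, gives `(n M k / r)^k`.

The iterates stay holomorphic because `∂_v F (z)` is a one-variable Cauchy integral of
`w ↦ F (z + w v)` over a fixed circle, which can be differentiated under the integral in `z`.
-/

/-- The first-order differential operator `φ ↦ Σ_α g^α ∂_α φ` with coefficients `g`. -/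
noncomputable def opApply {n : ℕ} (g : Fin n → (Fin n → ℂ) → ℂ)
    (φ : (Fin n → ℂ) → ℂ) : (Fin n → ℂ) → ℂ :=
  fun y => ∑ α, g α y * fderiv ℂ φ y (Pi.single α 1)

/-- The successive application `f_{k-1} ∘ ⋯ ∘ f_1 ∘ f_0` of a family of first-order
differential operators to a function. -/
noncomputable def opIter {n : ℕ} (f : ℕ → Fin n → (Fin n → ℂ) → ℂ) :
    ℕ → ((Fin n → ℂ) → ℂ) → ((Fin n → ℂ) → ℂ)
  | 0, φ => φ
  | j + 1, φ => opApply (f j) (opIter f j φ)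

open Metric MeasureTheory Filter Topology Complex Real

section CauchyEstimates

variable {E G : Type*} [NormedAddCommGroup E] [NormedSpace ℂ E] [NormedAddCommGroup G]
  [NormedSpace ℂ G]

theorem HasFDerivAt.hasDerivAt_comp_add_smul {F : E → G} {F' : E →L[ℂ] G} {z v : E} {w : ℂ}
    (hF : HasFDerivAt F F' (z + w • v)) :
    HasDerivAt (fun w : ℂ => F (z + w • v)) (F' v) w :=
  hF.comp_hasDerivAt w (by simpa using ((hasDerivAt_id w).smul_const v).const_add z)

theorem norm_fderiv_le_of_forall_norm_le {F : E → G} {z : E} {ρ C : ℝ} (hρ : 0 < ρ)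
    (hF : DiffContOnCl ℂ F (ball z ρ)) (hC : ∀ y ∈ closedBall z ρ, ‖F y‖ ≤ C) :
    ‖fderiv ℂ F z‖ ≤ C / ρ := by
  have hC0 : 0 ≤ C := (norm_nonneg _).trans (hC z (mem_closedBall_self hρ.le))
  refine ContinuousLinearMap.opNorm_le_bound _ (by positivity) fun u => ?_
  rcases eq_or_ne u 0 with rfl | hu
  · simp
  have hu' : 0 < ‖u‖ := norm_pos_iff.2 hu
  have hline : DiffContOnCl ℂ (F ∘ fun w : ℂ => z + w • u) (ball 0 (ρ / ‖u‖)) := by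
    refine hF.comp (by fun_prop : Differentiable ℂ fun w : ℂ => z + w • u).diffContOnCl
      fun w hw => ?_
    rw [mem_ball_zero_iff, lt_div_iff₀ hu'] at hw
    simpa [dist_eq_norm, norm_smul] using hw
  have hderiv : deriv (F ∘ fun w : ℂ => z + w • u) 0 = fderiv ℂ F z u := by
    have := (hF.differentiableAt isOpen_ball (mem_ball_self hρ)).hasFDerivAt
    exact (HasFDerivAt.hasDerivAt_comp_add_smul (w := 0) (by simpa using this)).deriv
  calc ‖fderiv ℂ F z u‖ ≤ C / (ρ / ‖u‖) := by
        rw [← hderiv]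
        refine norm_deriv_le_of_forall_mem_sphere_norm_le (by positivity) hline fun w hw => hC _ ?_
        rw [mem_sphere_zero_iff_norm] at hw
        simp [dist_eq_norm, norm_smul, hw, hu'.ne']
    _ = C / ρ * ‖u‖ := by field_simp

theorem fderiv_apply_eq_smul_circleIntegral [CompleteSpace G] {F : E → G} {z v : E} {ε : ℝ}
    (hε : 0 < ε) (hF : ∀ w ∈ closedBall (0 : ℂ) ε, DifferentiableAt ℂ F (z + w • v)) :
    fderiv ℂ F z v = (2 * π * I)⁻¹ • ∮ w in C(0, ε), (1 / w ^ 2) • F (z + w • v) := by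
  have hline : DifferentiableOn ℂ (fun w : ℂ => F (z + w • v)) (closedBall 0 ε) := fun w hw =>
    (hF w hw).hasFDerivAt.hasDerivAt_comp_add_smul.differentiableAt.differentiableWithinAt
  have hderiv : deriv (fun w : ℂ => F (z + w • v)) 0 = fderiv ℂ F z v := by
    have := (hF 0 (mem_closedBall_self hε.le)).hasFDerivAt
    exact (HasFDerivAt.hasDerivAt_comp_add_smul (by simpa using this)).deriv
  have hcauchy := hline.deriv_eq_smul_circleIntegral hε
  simp only [sub_zero] at hcauchy
  rw [← hderiv, hcauchy, smul_smul, inv_mul_cancel₀ two_pi_I_ne_zero, one_smul]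

theorem hasFDerivAt_circleIntegral_smul_comp_add_smul [FiniteDimensional ℂ E] [MeasurableSpace E]
    [BorelSpace E] [CompleteSpace G] [SecondCountableTopology G] {F : E → G} {k : ℂ → ℂ}
    {s : Set E} {z₀ v : E} {ε B : ℝ} (hε : 0 < ε) (hk : ContinuousOn k (sphere 0 ε))
    (hs : s ∈ 𝓝 z₀) (hF : ∀ z ∈ s, ∀ w ∈ sphere (0 : ℂ) ε, DifferentiableAt ℂ F (z + w • v))
    (hB : ∀ z ∈ s, ∀ w ∈ sphere (0 : ℂ) ε, ‖fderiv ℂ F (z + w • v)‖ ≤ B) :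
    HasFDerivAt (fun z => ∮ w in C(0, ε), k w • F (z + w • v))
      (∮ w in C(0, ε), k w • fderiv ℂ F (z₀ + w • v)) z₀ := by
  set γ := circleMap 0 ε
  have hγ : ∀ θ, γ θ ∈ sphere (0 : ℂ) ε := circleMap_mem_sphere 0 hε.le
  obtain ⟨K, hK⟩ := (isCompact_sphere (0 : ℂ) ε).exists_bound_of_continuousOn hk
  have hkγ : Continuous fun θ => k (γ θ) := hk.comp_continuous (continuous_circleMap 0 ε) hγ
  have hγ' : Continuous (deriv γ) := by
    rw [show deriv γ = fun θ => γ θ * I from funext (deriv_circleMap 0 ε)]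
    exact (continuous_circleMap 0 ε).mul continuous_const
  have hline : ∀ z, Continuous fun θ => z + γ θ • v := fun z =>
    continuous_const.add ((continuous_circleMap 0 ε).smul continuous_const)
  have hcont : ∀ z ∈ s, Continuous fun θ => F (z + γ θ • v) := fun z hz =>
    continuous_iff_continuousAt.2 fun θ =>
      ContinuousAt.comp (g := F) (hF z hz _ (hγ θ)).continuousAt (hline z).continuousAt
  unfold circleIntegral
  refine intervalIntegral.hasFDerivAt_integral_of_dominated_of_fderiv_le (μ := volume)
    (F := fun z θ => deriv γ θ • k (γ θ) • F (z + γ θ • v))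
    (F' := fun z θ => deriv γ θ • k (γ θ) • fderiv ℂ F (z + γ θ • v))
    (bound := fun _ => ε * (K * B)) hs ?_ ?_ ?_ ?_ ?_ ?_
  · filter_upwards [hs] with z hz
    exact (hγ'.smul (hkγ.smul (hcont z hz))).aestronglyMeasurable
  · exact (hγ'.smul (hkγ.smul (hcont z₀ (mem_of_mem_nhds hs)))).intervalIntegrable _ _
  · exact (hγ'.aestronglyMeasurable.smul (hkγ.aestronglyMeasurable.smul
      ((measurable_fderiv ℂ F).comp (hline z₀).measurable).aestronglyMeasurable))
  · refine Eventually.of_forall fun θ _ z hz => ?_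
    have hγθ : ‖deriv γ θ‖ = ε := by simp [γ, deriv_circleMap, abs_of_pos hε]
    rw [norm_smul, norm_smul, hγθ]
    have hkθ := hK _ (hγ θ)
    exact mul_le_mul_of_nonneg_left (mul_le_mul hkθ (hB z hz _ (hγ θ)) (norm_nonneg _)
      ((norm_nonneg _).trans hkθ)) hε.le
  · exact intervalIntegrable_const
  · refine Eventually.of_forall fun θ _ z hz => ?_
    have hd := (hF z hz _ (hγ θ)).hasFDerivAt.comp z ((hasFDerivAt_id z).add_const (γ θ • v))
    rw [ContinuousLinearMap.comp_id] at hd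
    exact (hd.const_smul (k (γ θ))).const_smul (deriv γ θ)

theorem DifferentiableOn.fderiv_apply [FiniteDimensional ℂ E] [MeasurableSpace E] [BorelSpace E]
    [CompleteSpace G] [SecondCountableTopology G] {F : E → G} {O : Set E}
    (hF : DifferentiableOn ℂ F O) (hO : IsOpen O) (v : E) :
    DifferentiableOn ℂ (fun z => fderiv ℂ F z v) O := by
  intro z₀ hz₀
  obtain ⟨δ, hδ, hδO, hδC⟩ : ∃ δ > 0, closedBall z₀ δ ⊆ O ∧
      ∀ y ∈ closedBall z₀ δ, ‖F y‖ ≤ ‖F z₀‖ + 1 := by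
    have hev : ∀ᶠ y in 𝓝 z₀, y ∈ O ∧ ‖F y‖ ≤ ‖F z₀‖ + 1 :=
      Eventually.and (hO.mem_nhds hz₀)
        ((hF.continuousOn.continuousAt (hO.mem_nhds hz₀)).norm.eventually
          (Iic_mem_nhds (lt_add_one _)))
    obtain ⟨δ, hδ, h⟩ := nhds_basis_closedBall.mem_iff.1 hev
    exact ⟨δ, hδ, fun y hy => (h hy).1, fun y hy => (h hy).2⟩
  set ε := δ / (2 + ‖v‖)
  have hε : 0 < ε := by positivity
  have hball : ∀ z ∈ ball z₀ ε, ∀ w : ℂ, ‖w‖ ≤ ε →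
      closedBall (z + w • v) ε ⊆ closedBall z₀ δ := by
    intro z hz w hw
    refine closedBall_subset_closedBall' ?_
    rw [dist_eq_norm, add_sub_right_comm]
    calc _ ≤ ε + (‖z - z₀‖ + ‖w‖ * ‖v‖) := by grw [norm_add_le, norm_smul]
      _ ≤ ε + (ε + ε * ‖v‖) := by grw [← dist_eq_norm, mem_ball.1 hz, hw]
      _ = δ := by simp only [ε]; field_simp; ring
  have hdiff : ∀ z ∈ ball z₀ ε, ∀ w : ℂ, ‖w‖ ≤ ε → DifferentiableAt ℂ F (z + w • v) :=
    fun z hz w hw =>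
      hF.differentiableAt (hO.mem_nhds (hδO (hball z hz w hw (mem_closedBall_self hε.le))))
  have hbound : ∀ z ∈ ball z₀ ε, ∀ w : ℂ, ‖w‖ ≤ ε →
      ‖fderiv ℂ F (z + w • v)‖ ≤ (‖F z₀‖ + 1) / ε := fun z hz w hw =>
    norm_fderiv_le_of_forall_norm_le hε
      (hF.mono ((closure_ball_subset_closedBall.trans (hball z hz w hw)).trans hδO)).diffContOnCl
      fun y hy => hδC y (hball z hz w hw hy)
  have hcauchy : (fun z => fderiv ℂ F z v) =ᶠ[𝓝 z₀]
      fun z => (2 * π * I)⁻¹ • ∮ w in C(0, ε), (1 / w ^ 2) • F (z + w • v) :=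
    eventually_of_mem (ball_mem_nhds z₀ hε) fun z hz =>
      fderiv_apply_eq_smul_circleIntegral hε fun w hw =>
        hdiff z hz w (mem_closedBall_zero_iff.1 hw)
  have hk : ContinuousOn (fun w : ℂ => 1 / w ^ 2) (sphere 0 ε) :=
    continuousOn_const.div (continuousOn_id.pow 2) fun w hw =>
      pow_ne_zero 2 (ne_zero_of_mem_sphere hε.ne' ⟨w, hw⟩)
  have hint := hasFDerivAt_circleIntegral_smul_comp_add_smul hε hk (ball_mem_nhds z₀ hε)
    (fun z hz w hw => hdiff z hz w (mem_sphere_zero_iff_norm.1 hw).le)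
    (fun z hz w hw => hbound z hz w (mem_sphere_zero_iff_norm.1 hw).le)
  exact ((hint.differentiableAt.const_smul _).congr_of_eventuallyEq hcauchy).differentiableWithinAt

end CauchyEstimates

section DifferentialOperators

variable {n : ℕ}

theorem DifferentiableOn.opApply {O : Set (Fin n → ℂ)} {g : Fin n → (Fin n → ℂ) → ℂ}
    {φ : (Fin n → ℂ) → ℂ} (hφ : DifferentiableOn ℂ φ O) (hO : IsOpen O)
    (hg : ∀ α, DifferentiableOn ℂ (g α) O) : DifferentiableOn ℂ (opApply g φ) O :=
  DifferentiableOn.fun_sum fun α _ => (hg α).mul (hφ.fderiv_apply hO _)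

theorem DifferentiableOn.opIter {O : Set (Fin n → ℂ)} {f : ℕ → Fin n → (Fin n → ℂ) → ℂ}
    {φ : (Fin n → ℂ) → ℂ} (hφ : DifferentiableOn ℂ φ O) (hO : IsOpen O) {j : ℕ}
    (hf : ∀ i < j, ∀ α, DifferentiableOn ℂ (f i α) O) : DifferentiableOn ℂ (opIter f j φ) O := by
  induction j with
  | zero => exact hφ
  | succ j ih =>
    exact (ih fun i hi => hf i (hi.trans j.lt_succ_self)).opApply hO (hf j j.lt_succ_self)

theorem norm_opApply_le {g : Fin n → (Fin n → ℂ) → ℂ} {φ : (Fin n → ℂ) → ℂ}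
    {x : Fin n → ℂ} {ρ C M : ℝ} (hρ : 0 < ρ) (hφ : DiffContOnCl ℂ φ (ball x ρ))
    (hC : ∀ y ∈ closedBall x ρ, ‖φ y‖ ≤ C) (hM : ∀ α, ‖g α x‖ ≤ M) :
    ‖opApply g φ x‖ ≤ n * M * (C / ρ) := by
  have hderiv := norm_fderiv_le_of_forall_norm_le hρ hφ hC
  calc ‖opApply g φ x‖ ≤ ∑ α, ‖g α x‖ * ‖fderiv ℂ φ x (Pi.single α 1)‖ := by
        simpa only [opApply, norm_mul] using
          norm_sum_le Finset.univ fun α => g α x * fderiv ℂ φ x (Pi.single α 1)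
    _ ≤ ∑ _α : Fin n, M * (C / ρ) := by
        gcongr with α
        · exact (norm_nonneg _).trans (hM α)
        · exact hM α
        · calc ‖fderiv ℂ φ x (Pi.single α 1)‖ ≤ ‖fderiv ℂ φ x‖ * ‖(Pi.single α 1 : Fin n → ℂ)‖ :=
                (fderiv ℂ φ x).le_opNorm _
            _ = ‖fderiv ℂ φ x‖ := by simp [Pi.norm_single]
            _ ≤ C / ρ := hderiv
    _ = n * M * (C / ρ) := by simp [mul_assoc]

theorem norm_opIter_le {U O : Set (Fin n → ℂ)} {f : ℕ → Fin n → (Fin n → ℂ) → ℂ}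
    {φ : (Fin n → ℂ) → ℂ} {k : ℕ} {ρ M Mφ : ℝ} (hρ : 0 < ρ) (hO : IsOpen O) (hUO : U ⊆ O)
    (hf : ∀ j < k, ∀ α, DifferentiableOn ℂ (f j α) O)
    (hM : ∀ j < k, ∀ α, ∀ z ∈ U, ‖f j α z‖ ≤ M)
    (hφ : DifferentiableOn ℂ φ O) (hMφ : ∀ z ∈ U, ‖φ z‖ ≤ Mφ)
    {j : ℕ} (hjk : j ≤ k) {x : Fin n → ℂ} (hx : closedBall x (j * ρ) ⊆ U) :
    ‖opIter f j φ x‖ ≤ (n * M / ρ) ^ j * Mφ := by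
  induction j generalizing x with
  | zero => simpa [opIter] using hMφ x (hx (by simp))
  | succ j ih =>
    have hjk' : j < k := hjk
    have hball : closedBall x ρ ⊆ U :=
      (closedBall_subset_closedBall (by push_cast; nlinarith)).trans hx
    have hnear : ∀ y ∈ closedBall x ρ, closedBall y (j * ρ) ⊆ U := fun y hy =>
      (closedBall_subset_closedBall' (by rw [mem_closedBall] at hy; push_cast; linarith)).trans hx
    have hdiff : DifferentiableOn ℂ (opIter f j φ) O :=
      hφ.opIter hO fun i hi => hf i (hi.trans hjk')
    calc ‖opIter f (j + 1) φ x‖ ≤ n * M * ((n * M / ρ) ^ j * Mφ / ρ) :=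
          norm_opApply_le hρ
            (hdiff.mono ((closure_ball_subset_closedBall.trans hball).trans hUO)).diffContOnCl
            (fun y hy => ih hjk'.le (hnear y hy))
            (fun α => hM j hjk' α x (hball (mem_closedBall_self hρ.le)))
      _ = (n * M / ρ) ^ (j + 1) * Mφ := by ring

end DifferentialOperators

theorem stmt16_general {n : ℕ} (U V : Set (Fin n → ℂ))
    (r : ℝ) (hr : 0 < r)
    (hpoly : ∀ y ∈ V, ∀ z : Fin n → ℂ, (∀ α, ‖z α - y α‖ ≤ r) → z ∈ U)
    (O : Set (Fin n → ℂ)) (hO : IsOpen O) (hUO : U ⊆ O)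
    (k : ℕ) (f : ℕ → Fin n → (Fin n → ℂ) → ℂ)
    (hf : ∀ j < k, ∀ α, DifferentiableOn ℂ (f j α) O)
    (M : ℝ) (hM : ∀ j < k, ∀ α, ∀ z ∈ U, ‖f j α z‖ ≤ M)
    (φ : (Fin n → ℂ) → ℂ) (hφ : DifferentiableOn ℂ φ O)
    (Mφ : ℝ) (hMφ : ∀ z ∈ U, ‖φ z‖ ≤ Mφ) :
    ∀ y ∈ V,
      ‖opIter f k φ y‖ ≤ ((n : ℝ) * M / r) ^ k * (k : ℝ) ^ k * Mφ := by
  intro y hy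
  have hU : closedBall y r ⊆ U := fun z hz => hpoly y hy z fun α => by
    simpa [dist_eq_norm] using (dist_le_pi_dist z y α).trans (mem_closedBall.1 hz)
  rcases Nat.eq_zero_or_pos k with rfl | hk
  · simpa [opIter] using hMφ y (hU (mem_closedBall_self hr.le))
  have hk' : (k : ℝ) ≠ 0 := by positivity
  calc ‖opIter f k φ y‖ ≤ (n * M / (r / k)) ^ k * Mφ :=
        norm_opIter_le (by positivity) hO hUO hf hM hφ hMφ le_rfl
          (by rwa [mul_div_cancel₀ r hk'])
    _ = ((n : ℝ) * M / r) ^ k * (k : ℝ) ^ k * Mφ := by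
        rw [div_div_eq_mul_div, mul_div_right_comm, mul_pow]

/-- **iterated Cauchy estimate.** If every closed polydisc of polyradius `r`
centred at a point of `V` is contained in `U`, the coefficients of the first-order operators
`f_0, …, f_{k-1}` are holomorphic on an open set containing `U` and bounded by `M` on `U`,
then for every `φ` holomorphic on that open set,
`sup_V |(f_{k-1} ∘ ⋯ ∘ f_0) φ| ≤ (nM/r)^k k^k sup_U |φ|`. -/
theorem stmt16 {n : ℕ} (U V : Set (Fin n → ℂ)) (hUc : IsCompact U) (hVc : IsCompact V)
    (r : ℝ) (hr : 0 < r)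
    (hpoly : ∀ y ∈ V, ∀ z : Fin n → ℂ, (∀ α, ‖z α - y α‖ ≤ r) → z ∈ U)
    (O : Set (Fin n → ℂ)) (hO : IsOpen O) (hUO : U ⊆ O)
    (k : ℕ) (f : ℕ → Fin n → (Fin n → ℂ) → ℂ)
    (hf : ∀ j < k, ∀ α, DifferentiableOn ℂ (f j α) O)
    (M : ℝ) (hM : ∀ j < k, ∀ α, ∀ z ∈ U, ‖f j α z‖ ≤ M)
    (φ : (Fin n → ℂ) → ℂ) (hφ : DifferentiableOn ℂ φ O)
    (Mφ : ℝ) (hMφ : ∀ z ∈ U, ‖φ z‖ ≤ Mφ) :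
    ∀ y ∈ V,
      ‖opIter f k φ y‖ ≤ ((n : ℝ) * M / r) ^ k * (k : ℝ) ^ k * Mφ :=
  stmt16_general U V r hr hpoly O hO hUO k f hf M hM φ hφ Mφ hMφ
end

section
/- Let X : ℝ → ℝ^d be a continuously differentiable path. For s ≤ t and indices j₁, …, j_n ∈ {1, …, d}, define the iterated integral ⟨X_{st}, (j₁, …, j_n)⟩ := ∫_{s ≤ t_n ≤ ⋯ ≤ t₁ ≤ t} Ẋ_{j₁}(t₁) ⋯ Ẋ_{j_n}(t_n) dt₁ ⋯ dt_n, and ⟨X_{st}, ()⟩ := 1 for the empty index list. Then for all s ≤ u ≤ t, Chen's identity holds: ⟨X_{st}, (j₁, …, j_n)⟩ = Σ_{k=0}^{n} ⟨X_{ut}, (j₁, …, j_k)⟩ · ⟨X_{su}, (j_{k+1}, …, j_n)⟩. -/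
/-!
Slicing off the largest time variable and applying Fubini identifies the simplex integral
`⟨X_{st}, j :: L⟩` with `∫_s^t Ẋ_j(τ) ⟨X_{sτ}, L⟩ dτ`, so the signature is the recursively defined
iterated integral. For oriented iterated integrals Chen's identity holds for all `s, u, t`, by
induction on the word: split `∫_s^t = ∫_s^u + ∫_u^t` and expand the inner integral over `[u, t]`
with the induction hypothesis.
-/

open MeasureTheory

/-- The iterated (signature) integral `⟨X_{st}, L⟩` of a path `X : ℝ → ℝ^d` over the simplex
`s ≤ t_n ≤ ⋯ ≤ t₁ ≤ t`, for a list `L` of coordinate indices. For the empty list it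
equals `1`. -/
noncomputable def sig (d : ℕ) (X : ℝ → Fin d → ℝ) (s t : ℝ) (L : List (Fin d)) : ℝ :=
  ∫ u in {u : Fin L.length → ℝ | (∀ i, u i ∈ Set.Icc s t) ∧
      ∀ i i' : Fin L.length, i ≤ i' → u i' ≤ u i},
    ∏ i, deriv (fun τ => X τ (L.get i)) (u i)

open Set

lemma Fin.antitone_cons {α : Type*} [Preorder α] {n : ℕ} {f : Fin n → α} {a : α} :
    Antitone (Fin.cons a f : Fin (n + 1) → α) ↔ (∀ i, f i ≤ a) ∧ Antitone f := by
  simp only [antitone_iff_forall_lt]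
  exact Fin.liftFun_cons (· ≥ ·)

theorem MeasureTheory.integral_fin_cons {E : Type*} [NormedAddCommGroup E] [NormedSpace ℝ E]
    {n : ℕ} {F : (Fin (n + 1) → ℝ) → E} (hF : Integrable F) :
    ∫ w, F w = ∫ τ, ∫ v, F (Fin.cons τ v) := by
  have he := (volume_preserving_piFinSuccAbove (fun _ : Fin (n + 1) => ℝ) 0).symm
  rw [← he.integral_comp (MeasurableEquiv.measurableEmbedding _), Measure.volume_eq_prod,
    integral_prod]
  · simp_rw [MeasurableEquiv.piFinSuccAbove_symm_apply, Fin.insertNthEquiv, Equiv.coe_fn_mk,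
      Fin.insertNth_zero']
  · rw [← Measure.volume_eq_prod]
    exact (he.integrable_comp_emb (MeasurableEquiv.measurableEmbedding _)).2 hF

def orderedSimplex (n : ℕ) (s t : ℝ) : Set (Fin n → ℝ) :=
  {u | (∀ i, u i ∈ Icc s t) ∧ Antitone u}

lemma isCompact_orderedSimplex (n : ℕ) (s t : ℝ) : IsCompact (orderedSimplex n s t) := by
  convert (isCompact_univ_pi fun _ : Fin n => isCompact_Icc (a := s) (b := t)).inter_right
    isClosed_antitone using 1
  ext u
  simp only [orderedSimplex, mem_inter_iff, mem_univ_pi, mem_ofPred_eq]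

lemma measurableSet_orderedSimplex (n : ℕ) (s t : ℝ) : MeasurableSet (orderedSimplex n s t) :=
  (isCompact_orderedSimplex n s t).isClosed.measurableSet

lemma orderedSimplex_zero (s t : ℝ) : orderedSimplex 0 s t = univ :=
  eq_univ_of_forall fun _ => ⟨finZeroElim, fun i => i.elim0⟩

lemma cons_mem_orderedSimplex_iff {n : ℕ} {s t τ : ℝ} {v : Fin n → ℝ} :
    (Fin.cons τ v : Fin (n + 1) → ℝ) ∈ orderedSimplex (n + 1) s t ↔
      τ ∈ Icc s t ∧ v ∈ orderedSimplex n s τ := by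
  simp only [orderedSimplex, mem_ofPred_eq, Fin.forall_fin_succ, Fin.cons_zero, Fin.cons_succ,
    Fin.antitone_cons, mem_Icc]
  constructor
  · rintro ⟨⟨hτ, hv⟩, hvτ, hanti⟩
    exact ⟨hτ, fun i => ⟨(hv i).1, hvτ i⟩, hanti⟩
  · rintro ⟨hτ, hv, hanti⟩
    exact ⟨⟨hτ, fun i => ⟨(hv i).1, (hv i).2.trans hτ.2⟩⟩, fun i => (hv i).2, hanti⟩

theorem setIntegral_orderedSimplex_succ {E : Type*} [NormedAddCommGroup E] [NormedSpace ℝ E]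
    {n : ℕ} {F : (Fin (n + 1) → ℝ) → E} (hF : Continuous F) (s t : ℝ) :
    ∫ w in orderedSimplex (n + 1) s t, F w =
      ∫ τ in Icc s t, ∫ v in orderedSimplex n s τ, F (Fin.cons τ v) := by
  classical
  rw [← integral_indicator (measurableSet_orderedSimplex _ _ _), integral_fin_cons
    ((hF.continuousOn.integrableOn_compact (isCompact_orderedSimplex _ _ _)).integrable_indicator
      (measurableSet_orderedSimplex _ _ _)), ← integral_indicator measurableSet_Icc]
  congr 1 with τ
  by_cases hτ : τ ∈ Icc s t
  · rw [indicator_of_mem hτ, ← integral_indicator (measurableSet_orderedSimplex _ _ _)]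
    congr 1 with v
    simp only [indicator_apply, cons_mem_orderedSimplex_iff, hτ, true_and]
  · simp only [indicator_apply, cons_mem_orderedSimplex_iff, hτ, false_and, if_false,
      integral_zero]

section IteratedIntegral

variable {ι : Type*} (g : ι → ℝ → ℝ)

noncomputable def iteratedIntegral : List ι → ℝ → ℝ → ℝ
  | [], _, _ => 1
  | j :: L, s, t => ∫ τ in s..t, g j τ * iteratedIntegral L s τ

variable {g}

@[simp] lemma iteratedIntegral_nil (s t : ℝ) : iteratedIntegral g [] s t = 1 := rfl

lemma iteratedIntegral_cons (j : ι) (L : List ι) (s t : ℝ) :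
    iteratedIntegral g (j :: L) s t = ∫ τ in s..t, g j τ * iteratedIntegral g L s τ := rfl

lemma continuous_iteratedIntegral (hg : ∀ j, Continuous (g j)) (L : List ι) (s : ℝ) :
    Continuous (iteratedIntegral g L s) := by
  induction L with
  | nil => exact continuous_const
  | cons j L ih =>
    exact intervalIntegral.continuous_primitive
      (fun a b => ((hg j).mul ih).intervalIntegrable a b) s

theorem setIntegral_orderedSimplex_eq_iteratedIntegral (hg : ∀ j, Continuous (g j))
    (L : List ι) {s t : ℝ} (hst : s ≤ t) :
    ∫ u in orderedSimplex L.length s t, ∏ i, g (L.get i) (u i) = iteratedIntegral g L s t := by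
  induction L generalizing t with
  | nil => simp [orderedSimplex_zero, volume_pi, Measure.real]
  | cons j L ih =>
    have hF : Continuous fun u : Fin (L.length + 1) → ℝ => ∏ i, g ((j :: L).get i) (u i) :=
      continuous_finsetProd _ fun i _ => (hg _).comp (continuous_apply i)
    rw [iteratedIntegral_cons, intervalIntegral.integral_of_le hst, ← integral_Icc_eq_integral_Ioc]
    refine (setIntegral_orderedSimplex_succ hF s t).trans ?_
    refine setIntegral_congr_fun measurableSet_Icc fun τ hτ => ?_
    rw [← ih hτ.1, ← integral_const_mul]
    congr 1 with v
    exact Fin.prod_univ_succ _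

theorem iteratedIntegral_eq_sum_take_mul_drop (hg : ∀ j, Continuous (g j)) (L : List ι)
    (s u t : ℝ) :
    iteratedIntegral g L s t = ∑ k ∈ Finset.range (L.length + 1),
      iteratedIntegral g (L.take k) u t * iteratedIntegral g (L.drop k) s u := by
  induction L generalizing t with
  | nil => simp
  | cons j L ih =>
    have hint : ∀ (M : List ι) (a b c : ℝ),
        IntervalIntegrable (fun τ => g j τ * iteratedIntegral g M a τ) volume b c :=
      fun M a b c => ((hg j).mul (continuous_iteratedIntegral hg M a)).intervalIntegrable b c
    have htail : ∫ τ in u..t, g j τ * iteratedIntegral g L s τ =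
        ∑ k ∈ Finset.range (L.length + 1),
          iteratedIntegral g (j :: L.take k) u t * iteratedIntegral g (L.drop k) s u := by
      simp_rw [ih, Finset.mul_sum, ← mul_assoc]
      rw [intervalIntegral.integral_finsetSum fun k _ => (hint _ _ _ _).mul_const _]
      simp only [intervalIntegral.integral_mul_const, iteratedIntegral_cons]
    rw [iteratedIntegral_cons, ← intervalIntegral.integral_add_adjacent_intervals (hint L s s u)
      (hint L s u t), ← iteratedIntegral_cons, htail, List.length_cons,
      Finset.sum_range_succ' _ (L.length + 1)]
    simp only [List.take_succ_cons, List.drop_succ_cons, List.take_zero, List.drop_zero,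
      iteratedIntegral_nil, one_mul, add_comm]

end IteratedIntegral

lemma sig_eq_iteratedIntegral {d : ℕ} {X : ℝ → Fin d → ℝ}
    (hX : ∀ j, Continuous (deriv fun τ => X τ j)) (L : List (Fin d)) {s t : ℝ} (hst : s ≤ t) :
    sig d X s t L = iteratedIntegral (fun j => deriv fun τ => X τ j) L s t :=
  -- the domain in `sig` is `orderedSimplex` with `Antitone` unfolded
  setIntegral_orderedSimplex_eq_iteratedIntegral hX L hst

/-- **Chen's identity.** For a continuously differentiable path
`X : ℝ → ℝ^d` and `s ≤ u ≤ t`,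
`⟨X_{st}, (j₁,…,jₙ)⟩ = Σ_{k=0}^n ⟨X_{ut}, (j₁,…,j_k)⟩·⟨X_{su}, (j_{k+1},…,jₙ)⟩`. -/
theorem stmt18 (d : ℕ) (X : ℝ → Fin d → ℝ)
    (hX : ∀ j : Fin d, ContDiff ℝ 1 (fun τ => X τ j))
    (L : List (Fin d)) (s u t : ℝ) (hsu : s ≤ u) (hut : u ≤ t) :
    sig d X s t L
      = ∑ k ∈ Finset.range (L.length + 1),
          sig d X u t (L.take k) * sig d X s u (L.drop k) := by
  have hX' : ∀ j, Continuous (deriv fun τ => X τ j) := fun j => (hX j).continuous_deriv le_rfl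
  rw [sig_eq_iteratedIntegral hX' L (hsu.trans hut),
    iteratedIntegral_eq_sum_take_mul_drop hX' L s u t]
  refine Finset.sum_congr rfl fun k _ => ?_
  rw [sig_eq_iteratedIntegral hX' _ hut, sig_eq_iteratedIntegral hX' _ hsu]
end
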